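/- arXiv:2206.03466 — 6 statements merged into one kernel-verified Lean document; each statement's English description precedes it below -/
import Mathlib

section
/- For a gradient-flow trajectory of a two-layer ReLU network on an orthogonally separable dataset, starting from a balanced and live initialisation, with either the exponential or the logistic loss: for all j ∈ [k] and all t ≥ 0, the vector w_j(t) − w_j(0) lies in cone(sgn(a_j) y_1 x_1, ..., sgn(a_j) y_n x_n), where sgn(a_j) is the (constant) sign of a_j along the trajectory and cone(u_1,...,u_m) = {Σ_i b_i u_i : b_1,...,b_m ≥ 0}. -/
open MeasureTheory Filter Finset

/-- Euclidean inner product of real vectors. -/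
noncomputable def dotp {m : ℕ} (u v : Fin m → ℝ) : ℝ := ∑ i, u i * v i

/-- Euclidean norm of a real vector. -/
noncomputable def norm2 {m : ℕ} (v : Fin m → ℝ) : ℝ := Real.sqrt (∑ i, v i ^ 2)

/-- The ReLU function `ψ(u) = max{u, 0}`. -/
noncomputable def relu (u : ℝ) : ℝ := max u 0

/-- The two-layer ReLU network `N_θ(z) = Σ_j a_j ψ(w_jᵀ z)`. -/
noncomputable def net {d k : ℕ} (w : Fin k → Fin d → ℝ) (a : Fin k → ℝ)
    (z : Fin d → ℝ) : ℝ :=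
  ∑ j, a j * relu (dotp (w j) z)

/-!
Fix a neuron `j`. Almost everywhere along the flow `a_j a_j' = ⟨w_j, w_j'⟩`, because
`σᵢⱼ ⟨w_j, xᵢ⟩ = ψ(⟨w_j, xᵢ⟩)`; hence `a_j² - ‖w_j‖²` is constant and the balance
`|a_j| = ‖w_j‖` persists. Balance gives `|a_j'| ≤ M |a_j|` on every bounded time interval, so by
Grönwall `a_j` never vanishes and keeps the sign of `a_j(0)`. Then at almost every time
`w_j' = -Σᵢ ℓ'(yᵢ N(xᵢ)) yᵢ a_j σᵢⱼ xᵢ` is a nonnegative combination of the vectors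
`sgn(a_j) yᵢ xᵢ`, and so is its integral `w_j(t) - w_j(0)`: orthogonal separability makes these
generators pairwise non-obtuse, which bounds the coefficients of a cone point by its norm and
so makes the cone closed.
-/

namespace PointedCone

variable {ι E : Type*} [Fintype ι]

theorem mem_hull_range_iff [AddCommGroup E] [Module ℝ E] {u : ι → E} {v : E} :
    v ∈ hull ℝ (Set.range u) ↔ ∃ b : ι → ℝ, (∀ i, 0 ≤ b i) ∧ ∑ i, b i • u i = v := by
  rw [Submodule.mem_span_range_iff_exists_fun]
  constructor
  · rintro ⟨c, rfl⟩
    exact ⟨fun i => c i, fun i => (c i).2, rfl⟩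
  · rintro ⟨b, hb, rfl⟩
    exact ⟨fun i => ⟨b i, hb i⟩, rfl⟩

theorem integral_mem {α : Type*} [MeasurableSpace α] {μ : Measure α} [IsFiniteMeasure μ]
    [NormedAddCommGroup E] [NormedSpace ℝ E] [CompleteSpace E] {C : PointedCone ℝ E}
    (hC : IsClosed (C : Set E)) {f : α → E} (hf : ∀ᵐ x ∂μ, f x ∈ C) : ∫ x, f x ∂μ ∈ C := by
  by_cases hfi : Integrable f μ
  swap
  · simp [integral_undef hfi]
  rcases eq_zero_or_neZero μ with rfl | hμ
  · simp
  rw [← measure_smul_average]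
  exact PointedCone.smul_mem C measureReal_nonneg (C.convex.average_mem hC hf hfi)

theorem intervalIntegral_mem [NormedAddCommGroup E] [NormedSpace ℝ E] [CompleteSpace E]
    {C : PointedCone ℝ E} (hC : IsClosed (C : Set E)) {f : ℝ → E} {t : ℝ} (ht : 0 ≤ t)
    (hf : ∀ᵐ s, 0 ≤ s → f s ∈ C) : ∫ s in (0 : ℝ)..t, f s ∈ C := by
  rw [intervalIntegral.integral_of_le ht]
  have : IsFiniteMeasure (volume.restrict (Set.Ioc (0 : ℝ) t)) := by
    rw [isFiniteMeasure_restrict]; exact measure_Ioc_lt_top.ne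
  refine integral_mem hC ((ae_restrict_iff' measurableSet_Ioc).2 ?_)
  filter_upwards [hf] with s hs hst using hs hst.1.le

end PointedCone

section DotCone

variable {d : ℕ} {ι : Type*} [Fintype ι] {u : ι → Fin d → ℝ}

theorem sq_mul_dotp_self_le_of_dotp_nonneg (hu : ∀ i i', 0 ≤ dotp (u i) (u i')) {b : ι → ℝ}
    (hb : ∀ i, 0 ≤ b i) (i : ι) :
    b i ^ 2 * dotp (u i) (u i) ≤ dotp (∑ i, b i • u i) (∑ i, b i • u i) := by
  have hexpand : dotp (∑ i, b i • u i) (∑ i, b i • u i)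
      = ∑ i, ∑ i', b i * b i' * dotp (u i) (u i') := by
    simp only [dotp, Finset.sum_apply, Pi.smul_apply, smul_eq_mul, sum_mul, mul_sum]
    rw [sum_comm]
    refine sum_congr rfl fun i _ => ?_
    rw [sum_comm]
    exact sum_congr rfl fun i' _ => sum_congr rfl fun ic _ => by ring
  have hterm : ∀ i i', 0 ≤ b i * b i' * dotp (u i) (u i') := fun i i' =>
    mul_nonneg (mul_nonneg (hb i) (hb i')) (hu i i')
  rw [hexpand]
  calc b i ^ 2 * dotp (u i) (u i) = b i * b i * dotp (u i) (u i) := by ring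
    _ ≤ ∑ i', b i * b i' * dotp (u i) (u i') :=
      single_le_sum (fun i' _ => hterm i i') (mem_univ i)
    _ ≤ _ := single_le_sum (f := fun i => ∑ i', b i * b i' * dotp (u i) (u i'))
      (fun i _ => sum_nonneg fun i' _ => hterm i i') (mem_univ i)

theorem isClosed_hull_range_of_dotp_nonneg (hu₀ : ∀ i, 0 < dotp (u i) (u i))
    (hu : ∀ i i', 0 ≤ dotp (u i) (u i')) :
    IsClosed (PointedCone.hull ℝ (Set.range u) : Set (Fin d → ℝ)) := by
  refine isClosed_of_closure_subset fun v hv => ?_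
  obtain ⟨vs, hvs, hlim⟩ := mem_closure_iff_seq_limit.1 hv
  choose bs hbs₀ hbs using fun m => PointedCone.mem_hull_range_iff.1 (hvs m)
  have hdotp : Continuous fun v : Fin d → ℝ => dotp v v := by unfold dotp; fun_prop
  obtain ⟨R, hR⟩ := ((hdotp.tendsto v).comp hlim).bddAbove_range
  have hbounded : ∀ m, bs m ∈ Set.Icc 0 fun i => √(R / dotp (u i) (u i)) := fun m =>
    ⟨fun i => hbs₀ m i, fun i => Real.le_sqrt_of_sq_le <| (le_div_iff₀ (hu₀ i)).2 <|
      (sq_mul_dotp_self_le_of_dotp_nonneg hu (hbs₀ m) i).trans <| by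
        rw [hbs m]; exact hR (Set.mem_range_self m)⟩
  obtain ⟨b, ⟨hb₀, -⟩, φ, hφ, hlimb⟩ := isCompact_Icc.tendsto_subseq hbounded
  refine PointedCone.mem_hull_range_iff.2
    ⟨b, hb₀, tendsto_nhds_unique ?_ (hlim.comp hφ.tendsto_atTop)⟩
  have hsum : Continuous fun b : ι → ℝ => ∑ i, b i • u i := by fun_prop
  simpa [Function.comp_def, hbs] using (hsum.tendsto b).comp hlimb

end DotCone

namespace AbsolutelyContinuousOnInterval

theorem sum {ι : Type*} {s : Finset ι} {f : ι → ℝ → ℝ} {a b : ℝ}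
    (hf : ∀ i ∈ s, AbsolutelyContinuousOnInterval (f i) a b) :
    AbsolutelyContinuousOnInterval (fun x => ∑ i ∈ s, f i x) a b := by
  classical
  induction s using Finset.induction_on with
  | empty =>
    simpa using (LipschitzWith.const (0 : ℝ)).lipschitzOnWith.absolutelyContinuousOnInterval
  | insert i s hi ih =>
    simp only [sum_insert hi]
    exact (hf i (mem_insert_self i s)).add (ih fun j hj => hf j (mem_insert_of_mem hj))

theorem le_of_ae_deriv_nonneg {f : ℝ → ℝ} {a b : ℝ} (hab : a ≤ b)
    (hf : AbsolutelyContinuousOnInterval f a b) (hd : ∀ᵐ x, x ∈ Set.Icc a b → 0 ≤ deriv f x) :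
    f a ≤ f b := by
  have hint : 0 ≤ ∫ x in a..b, deriv f x :=
    intervalIntegral.integral_nonneg_of_ae_restrict hab
      ((ae_restrict_iff' measurableSet_Icc).2 hd)
  linarith [hf.integral_deriv_eq_sub]

end AbsolutelyContinuousOnInterval

section Primitive

variable {g g' : ℝ → ℝ}

theorem continuous_of_eq_add_integral (hg' : ∀ t, IntervalIntegrable g' volume 0 t)
    (hg : ∀ t, g t = g 0 + ∫ s in (0 : ℝ)..t, g' s) : Continuous g := by
  rw [funext hg]
  exact continuous_const.add
    (intervalIntegral.continuous_primitive (fun a b => (hg' a).symm.trans (hg' b)) 0)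

theorem absolutelyContinuousOnInterval_of_eq_add_integral {t : ℝ}
    (hg' : IntervalIntegrable g' volume 0 t) (hg : ∀ s, g s = g 0 + ∫ r in (0 : ℝ)..s, g' r) :
    AbsolutelyContinuousOnInterval g 0 t := by
  rw [funext hg]
  exact (LipschitzWith.const (g 0)).lipschitzOnWith.absolutelyContinuousOnInterval.add
    (hg'.absolutelyContinuousOnInterval_intervalIntegral Set.left_mem_uIcc)

theorem ae_hasDerivAt_of_eq_add_integral {t : ℝ} (hg' : IntervalIntegrable g' volume 0 t)
    (hg : ∀ s, g s = g 0 + ∫ r in (0 : ℝ)..s, g' r) :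
    ∀ᵐ s, s ∈ Set.uIcc 0 t → HasDerivAt g (g' s) s := by
  filter_upwards [hg'.ae_hasDerivAt_integral] with s hs hst
  rw [funext hg]
  exact (hs hst 0 Set.left_mem_uIcc).const_add _

theorem sub_eq_intervalIntegral_of_eq_add_integral {ι : Type*} [Fintype ι] {g g' : ℝ → ι → ℝ}
    {t : ℝ} (ht : 0 ≤ t) (hg' : ∀ i, IntervalIntegrable (fun s => g' s i) volume 0 t)
    (hg : ∀ i, g t i = g 0 i + ∫ s in (0 : ℝ)..t, g' s i) :
    g t - g 0 = ∫ s in (0 : ℝ)..t, g' s := by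
  funext i
  rw [Pi.sub_apply, hg i, add_sub_cancel_left, intervalIntegral.integral_of_le ht,
    intervalIntegral.integral_of_le ht, eval_integral fun i => (hg' i).1]

end Primitive

section Neuron

variable {d n : ℕ} {x : Fin n → Fin d → ℝ}

theorem mul_eq_relu_of_sign {σ u : ℝ} (hneg : u < 0 → σ = 0) (hpos : 0 < u → σ = 1) :
    σ * u = relu u := by
  rcases lt_trichotomy u 0 with h | rfl | h
  · simp [hneg h, relu, h.le]
  · simp [relu]
  · simp [hpos h, relu, h.le]

theorem relu_dotp_le_norm2_mul_norm2 (u v : Fin d → ℝ) : relu (dotp u v) ≤ norm2 u * norm2 v :=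
  max_le (Real.sum_mul_le_sqrt_mul_sqrt _ u v) (by unfold norm2; positivity)

/-- Gradient-flow velocity `(w', a')` of a hidden neuron `(w, a)`, where `c i` stands for the
loss weight `ℓ'(yᵢ N(xᵢ)) yᵢ` of sample `i` and `σ` for a subgradient selection of ReLU. -/
def IsNeuronStep (x : Fin n → Fin d → ℝ) (c : Fin n → ℝ) (w w' : Fin d → ℝ) (a a' : ℝ) :
    Prop :=
  ∃ σ : Fin n → ℝ, (∀ i, 0 ≤ σ i) ∧ (∀ i, dotp w (x i) < 0 → σ i = 0) ∧
    (∀ i, 0 < dotp w (x i) → σ i = 1) ∧ (∀ ic, w' ic = -∑ i, c i * a * σ i * x i ic) ∧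
    a' = -∑ i, c i * relu (dotp w (x i))

namespace IsNeuronStep

variable {c : Fin n → ℝ} {w w' : Fin d → ℝ} {a a' : ℝ}

theorem dotp_eq_mul (h : IsNeuronStep x c w w' a a') : dotp w w' = a * a' := by
  obtain ⟨σ, -, hneg, hpos, hw', ha'⟩ := h
  have hσ : ∀ i, σ i * dotp w (x i) = relu (dotp w (x i)) := fun i =>
    mul_eq_relu_of_sign (hneg i) (hpos i)
  calc dotp w w' = -∑ i, c i * a * (σ i * dotp w (x i)) := by
        simp only [dotp, hw', mul_neg, sum_neg_distrib, mul_sum]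
        rw [sum_comm]
        exact congrArg _ (sum_congr rfl fun i _ => sum_congr rfl fun ic _ => by ring)
    _ = a * a' := by
        simp only [hσ, ha', mul_neg, mul_sum]
        exact congrArg _ (sum_congr rfl fun i _ => by ring)

theorem abs_le (h : IsNeuronStep x c w w' a a') :
    |a'| ≤ (∑ i, |c i| * norm2 (x i)) * norm2 w := by
  obtain ⟨-, -, -, -, -, ha'⟩ := h
  rw [ha', abs_neg, sum_mul]
  refine (abs_sum_le_sum_abs _ _).trans (sum_le_sum fun i _ => ?_)
  have hrelu : 0 ≤ relu (dotp w (x i)) := le_max_right _ _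
  rw [abs_mul, abs_of_nonneg hrelu, mul_assoc, mul_comm (norm2 _)]
  exact mul_le_mul_of_nonneg_left (relu_dotp_le_norm2_mul_norm2 _ _) (abs_nonneg _)

theorem mem_hull {y : Fin n → ℝ} {S : ℝ} (hy : ∀ i, y i * y i = 1) (hS : S * S = 1)
    (hSa : 0 < S * a) (hcy : ∀ i, c i * y i ≤ 0) (h : IsNeuronStep x c w w' a a') :
    w' ∈ PointedCone.hull ℝ (Set.range fun i ic => S * y i * x i ic) := by
  obtain ⟨σ, hσ, -, -, hw', -⟩ := h
  refine PointedCone.mem_hull_range_iff.2 ⟨fun i => -(c i * y i) * (S * a) * σ i,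
    fun i => mul_nonneg (mul_nonneg (neg_nonneg.2 (hcy i)) hSa.le) (hσ i), ?_⟩
  funext ic
  simp only [hw', Finset.sum_apply, Pi.smul_apply, smul_eq_mul, ← sum_neg_distrib]
  refine sum_congr rfl fun i _ => ?_
  linear_combination
    (-(c i * a * σ i * x i ic) * y i * y i) * hS - c i * a * σ i * x i ic * hy i

end IsNeuronStep

/-- One hidden neuron of the gradient flow; the rest of the network enters only through the
loss weights `c t i`. -/
structure IsNeuronFlow (x : Fin n → Fin d → ℝ) (c : ℝ → Fin n → ℝ) (w w' : ℝ → Fin d → ℝ)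
    (a a' : ℝ → ℝ) : Prop where
  intervalIntegrable_w' : ∀ ic t, IntervalIntegrable (fun s => w' s ic) volume 0 t
  intervalIntegrable_a' : ∀ t, IntervalIntegrable a' volume 0 t
  w_eq : ∀ t ic, w t ic = w 0 ic + ∫ s in (0 : ℝ)..t, w' s ic
  a_eq : ∀ t, a t = a 0 + ∫ s in (0 : ℝ)..t, a' s
  step : ∀ᵐ t, 0 ≤ t → IsNeuronStep x (c t) (w t) (w' t) (a t) (a' t)

namespace IsNeuronFlow

variable {c : ℝ → Fin n → ℝ} {w w' : ℝ → Fin d → ℝ} {a a' : ℝ → ℝ}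

theorem continuous_a (hflow : IsNeuronFlow x c w w' a a') : Continuous a :=
  continuous_of_eq_add_integral hflow.intervalIntegrable_a' hflow.a_eq

theorem absolutelyContinuousOnInterval_a (hflow : IsNeuronFlow x c w w' a a') (t : ℝ) :
    AbsolutelyContinuousOnInterval a 0 t :=
  absolutelyContinuousOnInterval_of_eq_add_integral (hflow.intervalIntegrable_a' t) hflow.a_eq

theorem abs_eq_norm2 (hflow : IsNeuronFlow x c w w' a a') (hbal : |a 0| = norm2 (w 0))
    {t : ℝ} (ht : 0 ≤ t) : |a t| = norm2 (w t) := by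
  have hw : ∀ ic, AbsolutelyContinuousOnInterval (fun s => w s ic) 0 t := fun ic =>
    absolutelyContinuousOnInterval_of_eq_add_integral (hflow.intervalIntegrable_w' ic t)
      (hflow.w_eq · ic)
  set E : ℝ → ℝ := fun s => a s * a s - ∑ ic, w s ic * w s ic with hE
  have hEac : AbsolutelyContinuousOnInterval E 0 t := by
    have ha := hflow.absolutelyContinuousOnInterval_a t
    exact (ha.mul ha).sub
      (AbsolutelyContinuousOnInterval.sum fun ic _ => (hw ic).mul (hw ic))
  obtain ⟨C, hC⟩ := hEac.const_of_ae_hasDerivAt_zero <| by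
    filter_upwards [hflow.step,
      ae_hasDerivAt_of_eq_add_integral (hflow.intervalIntegrable_a' t) hflow.a_eq,
      ae_all_iff.2 fun ic => ae_hasDerivAt_of_eq_add_integral
        (hflow.intervalIntegrable_w' ic t) (hflow.w_eq · ic)] with s hstep hda hdw hs
    have hs₀ : 0 ≤ s := by rw [Set.uIcc_of_le ht] at hs; exact hs.1
    have hdot := (hstep hs₀).dotp_eq_mul
    refine (((hda hs).fun_mul (hda hs)).fun_sub (HasDerivAt.fun_sum (u := univ)
      fun ic _ => (hdw ic hs).fun_mul (hdw ic hs))).congr_deriv ?_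
    have hsum : ∑ ic, (w' s ic * w s ic + w s ic * w' s ic) = 2 * dotp (w s) (w' s) := by
      rw [dotp, mul_sum]
      exact sum_congr rfl fun ic _ => by ring
    rw [hsum, hdot]
    ring
  have hnorm : ∀ s, norm2 (w s) * norm2 (w s) = ∑ ic, w s ic * w s ic := fun s => by
    rw [norm2, Real.mul_self_sqrt (by positivity)]
    simp only [sq]
  have hEt : E t = 0 := by
    rw [hC t Set.right_mem_uIcc, ← hC 0 Set.left_mem_uIcc, hE]
    simp only [← hnorm, ← hbal, abs_mul_abs_self, sub_self]
  have hsq : |a t| * |a t| = norm2 (w t) * norm2 (w t) := by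
    rw [abs_mul_abs_self, hnorm]
    exact sub_eq_zero.1 hEt
  exact (mul_self_inj (abs_nonneg _) (Real.sqrt_nonneg _)).1 hsq

theorem ne_zero (hflow : IsNeuronFlow x c w w' a a') (hc : ∀ i, Continuous fun s => c s i)
    (hbal : |a 0| = norm2 (w 0)) (ha₀ : a 0 ≠ 0) {t : ℝ} (ht : 0 ≤ t) : a t ≠ 0 := by
  obtain ⟨M, hM⟩ := (isCompact_Icc (a := (0 : ℝ)) (b := t)).bddAbove_image
    (f := fun s => ∑ i, |c s i| * norm2 (x i)) (by fun_prop)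
  -- Grönwall: `|a'| ≤ M |a|` makes `e^{2Ms} a(s)²` nondecreasing.
  have hφ : AbsolutelyContinuousOnInterval (fun s => Real.exp (2 * M * s) * (a s * a s)) 0 t := by
    have ha := hflow.absolutelyContinuousOnInterval_a t
    exact (ContDiffOn.absolutelyContinuousOnInterval (by fun_prop)).mul (ha.mul ha)
  have hmono := hφ.le_of_ae_deriv_nonneg ht <| by
    filter_upwards [hflow.step,
      ae_hasDerivAt_of_eq_add_integral (hflow.intervalIntegrable_a' t) hflow.a_eq]
      with s hstep hda hs
    have hbound : -(a s * a' s) ≤ M * (a s * a s) := by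
      have hrate := (hstep hs.1).abs_le
      rw [← hflow.abs_eq_norm2 hbal hs.1] at hrate
      calc -(a s * a' s) ≤ |a s| * |a' s| := by rw [← abs_mul]; exact neg_le_abs _
        _ ≤ |a s| * (M * |a s|) := mul_le_mul_of_nonneg_left
            (hrate.trans (mul_le_mul_of_nonneg_right (hM ⟨s, hs, rfl⟩) (abs_nonneg _)))
            (abs_nonneg _)
        _ = M * (a s * a s) := by rw [← abs_mul_abs_self (a s)]; ring
    have hda' := hda (Set.uIcc_of_le ht ▸ hs)
    rw [(((hasDerivAt_id' s).const_mul (2 * M)).exp.fun_mul (hda'.fun_mul hda')).deriv]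
    nlinarith [Real.exp_pos (2 * M * s)]
  intro hat
  have : 0 < a 0 * a 0 := mul_self_pos.2 ha₀
  simp only [hat, mul_zero, Real.exp_zero, one_mul] at hmono
  linarith

theorem sign_mul_pos (hflow : IsNeuronFlow x c w w' a a') (hc : ∀ i, Continuous fun s => c s i)
    (hbal : |a 0| = norm2 (w 0)) (ha₀ : a 0 ≠ 0) {t : ℝ} (ht : 0 ≤ t) :
    0 < Real.sign (a 0) * a t := by
  by_contra! hle
  obtain ⟨s, hs, hs₀⟩ := intermediate_value_Icc' ht
    (continuous_const.mul hflow.continuous_a).continuousOn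
    ⟨hle, (Real.sign_mul_pos_of_ne_zero _ ha₀).le⟩
  exact hflow.ne_zero hc hbal ha₀ hs.1
    ((mul_eq_zero.1 hs₀).resolve_left (mt Real.sign_eq_zero_iff.1 ha₀))

theorem sub_mem_hull (hflow : IsNeuronFlow x c w w' a a') {y : Fin n → ℝ}
    (hy : ∀ i, y i * y i = 1) (hcy : ∀ s i, c s i * y i ≤ 0)
    (hc : ∀ i, Continuous fun s => c s i) (hbal : |a 0| = norm2 (w 0)) (ha₀ : a 0 ≠ 0)
    (hclosed : IsClosed (PointedCone.hull ℝ
      (Set.range fun i ic => Real.sign (a 0) * y i * x i ic) : Set (Fin d → ℝ)))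
    {t : ℝ} (ht : 0 ≤ t) :
    w t - w 0 ∈ PointedCone.hull ℝ (Set.range fun i ic => Real.sign (a 0) * y i * x i ic) := by
  have hS : Real.sign (a 0) * Real.sign (a 0) = 1 := by
    rcases Real.sign_apply_eq_of_ne_zero _ ha₀ with h | h <;> simp [h]
  rw [sub_eq_intervalIntegral_of_eq_add_integral ht (hflow.intervalIntegrable_w' · t)
    (hflow.w_eq t)]
  refine PointedCone.intervalIntegral_mem hclosed ht ?_
  filter_upwards [hflow.step] with s hs hs₀
  exact (hs hs₀).mem_hull hy hS (hflow.sign_mul_pos hc hbal ha₀ hs₀) (hcy s)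

end IsNeuronFlow

end Neuron

theorem continuous_deriv_and_nonpos_of_loss {ℓ : ℝ → ℝ}
    (hℓ : (ℓ = fun u => Real.exp (-u)) ∨ (ℓ = fun u => Real.log (1 + Real.exp (-u)))) :
    Continuous (deriv ℓ) ∧ ∀ u, deriv ℓ u ≤ 0 := by
  rcases hℓ with rfl | rfl
  · have hd : deriv (fun u => Real.exp (-u)) = fun u => -Real.exp (-u) := by
      funext u; simpa using ((hasDerivAt_neg u).exp).deriv
    rw [hd]
    exact ⟨by fun_prop, fun u => neg_nonpos.2 (Real.exp_pos _).le⟩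
  · have hd : deriv (fun u => Real.log (1 + Real.exp (-u)))
        = fun u => -Real.exp (-u) / (1 + Real.exp (-u)) := by
      funext u
      simpa using (((hasDerivAt_neg u).exp.const_add 1).log (by positivity)).deriv
    rw [hd]
    exact ⟨Continuous.div (by fun_prop) (by fun_prop) fun u => by positivity,
      fun u => div_nonpos_of_nonpos_of_nonneg (neg_nonpos.2 (Real.exp_pos _).le)
        (by positivity)⟩

theorem continuous_net {d k : ℕ} {w : ℝ → Fin k → Fin d → ℝ} {a : ℝ → Fin k → ℝ}
    (hw : ∀ j ic, Continuous fun s => w s j ic) (ha : ∀ j, Continuous fun s => a s j)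
    (z : Fin d → ℝ) : Continuous fun s => net (w s) (a s) z := by
  unfold net relu dotp
  fun_prop

section Separable

variable {d n : ℕ} {x : Fin n → Fin d → ℝ} {y : Fin n → ℝ}

theorem label_mul_dotp_nonneg (hy : ∀ i, y i = 1 ∨ y i = -1)
    (hsep1 : ∀ i i', y i = y i' → 0 < dotp (x i) (x i'))
    (hsep2 : ∀ i i', y i ≠ y i' → dotp (x i) (x i') ≤ 0) (i i' : Fin n) :
    0 ≤ y i * y i' * dotp (x i) (x i') := by
  by_cases h : y i = y i'
  · rw [h]
    exact mul_nonneg (mul_self_nonneg _) (hsep1 i i' h).le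
  · have hyy : y i * y i' = -1 := by
      rcases hy i with hi | hi <;> rcases hy i' with hi' | hi' <;> simp_all
    rw [hyy]
    linarith [hsep2 i i' h]

theorem isClosed_hull_of_orthogonallySeparable (hy : ∀ i, y i = 1 ∨ y i = -1)
    (hsep1 : ∀ i i', y i = y i' → 0 < dotp (x i) (x i'))
    (hsep2 : ∀ i i', y i ≠ y i' → dotp (x i) (x i') ≤ 0) {S : ℝ} (hS : S ≠ 0) :
    IsClosed (PointedCone.hull ℝ (Set.range fun i ic => S * y i * x i ic) :
      Set (Fin d → ℝ)) := by
  have hdotp : ∀ i i', dotp (fun ic => S * y i * x i ic) (fun ic => S * y i' * x i' ic)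
      = S * S * (y i * y i' * dotp (x i) (x i')) := fun i i' => by
    simp only [dotp, mul_sum]
    exact sum_congr rfl fun ic _ => by ring
  refine isClosed_hull_range_of_dotp_nonneg (fun i => ?_) fun i i' => ?_ <;> rw [hdotp]
  · have hyi : y i * y i = 1 := by rcases hy i with h | h <;> simp [h]
    rw [hyi, one_mul]
    exact mul_pos (mul_self_pos.2 hS) (hsep1 i i rfl)
  · exact mul_nonneg (mul_self_nonneg S) (label_mul_dotp_nonneg hy hsep1 hsep2 i i')

end Separable

theorem gradient_flow_cone_membership_general
    (d n k : ℕ) (x : Fin n → Fin d → ℝ) (y : Fin n → ℝ)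
    (hy : ∀ i, y i = 1 ∨ y i = -1)
    (hsep1 : ∀ i i', y i = y i' → 0 < dotp (x i) (x i'))
    (hsep2 : ∀ i i', y i ≠ y i' → dotp (x i) (x i') ≤ 0)
    (ℓ : ℝ → ℝ)
    (hℓ : (ℓ = fun u => Real.exp (-u)) ∨ (ℓ = fun u => Real.log (1 + Real.exp (-u))))
    (w : ℝ → Fin k → Fin d → ℝ) (a : ℝ → Fin k → ℝ)
    (w' : ℝ → Fin k → Fin d → ℝ) (a' : ℝ → Fin k → ℝ)
    (hwInt : ∀ (j : Fin k) (i : Fin d) (t : ℝ),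
      IntervalIntegrable (fun s => w' s j i) volume 0 t)
    (haInt : ∀ (j : Fin k) (t : ℝ), IntervalIntegrable (fun s => a' s j) volume 0 t)
    (hwFTC : ∀ (t : ℝ) (j : Fin k) (i : Fin d),
      w t j i = w 0 j i + ∫ s in (0:ℝ)..t, w' s j i)
    (haFTC : ∀ (t : ℝ) (j : Fin k), a t j = a 0 j + ∫ s in (0:ℝ)..t, a' s j)
    (hODE : ∀ᵐ t ∂(volume.restrict (Set.Ici (0:ℝ))),
      ∃ σ : Fin n → Fin k → ℝ,
        (∀ i j, 0 ≤ σ i j ∧ σ i j ≤ 1) ∧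
        (∀ i j, dotp (w t j) (x i) < 0 → σ i j = 0) ∧
        (∀ i j, 0 < dotp (w t j) (x i) → σ i j = 1) ∧
        (∀ j ic, w' t j ic =
          -∑ i, deriv ℓ (y i * net (w t) (a t) (x i)) * y i * a t j * σ i j * x i ic) ∧
        (∀ j, a' t j =
          -∑ i, deriv ℓ (y i * net (w t) (a t) (x i)) * y i * relu (dotp (w t j) (x i))))
    (hbal : ∀ j, |a 0 j| = norm2 (w 0 j) ∧ a 0 j ≠ 0) :
    ∀ (j : Fin k) (t : ℝ), 0 ≤ t →
      ∃ b : Fin n → ℝ, (∀ i, 0 ≤ b i) ∧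
        ∀ ic, w t j ic - w 0 j ic = ∑ i, b i * (Real.sign (a 0 j) * y i * x i ic) := by
  intro j t ht
  obtain ⟨hℓ_cont, hℓ_nonpos⟩ := continuous_deriv_and_nonpos_of_loss hℓ
  have hyy : ∀ i, y i * y i = 1 := fun i => by rcases hy i with h | h <;> simp [h]
  have hflow : IsNeuronFlow x (fun s i => deriv ℓ (y i * net (w s) (a s) (x i)) * y i)
      (fun s => w s j) (fun s => w' s j) (fun s => a s j) (fun s => a' s j) := by
    refine ⟨hwInt j, haInt j, (hwFTC · j), (haFTC · j), ?_⟩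
    filter_upwards [(ae_restrict_iff' measurableSet_Ici).1 hODE] with s hs hs₀
    obtain ⟨σ, hσ, hneg, hpos, hw', ha'⟩ := hs hs₀
    exact ⟨(σ · j), fun i => (hσ i j).1, (hneg · j), (hpos · j), hw' j, ha' j⟩
  have hnet : ∀ z, Continuous fun s => net (w s) (a s) z := continuous_net
    (fun j ic => continuous_of_eq_add_integral (hwInt j ic) (hwFTC · j ic))
    (fun j => continuous_of_eq_add_integral (haInt j) (haFTC · j))
  have hmem := hflow.sub_mem_hull hyy
    (fun s i => by simpa only [mul_assoc, hyy, mul_one] using hℓ_nonpos _)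
    (fun i => (hℓ_cont.comp (continuous_const.mul (hnet (x i)))).mul continuous_const)
    (hbal j).1 (hbal j).2
    (isClosed_hull_of_orthogonallySeparable hy hsep1 hsep2
      (mt Real.sign_eq_zero_iff.1 (hbal j).2)) ht
  obtain ⟨b, hb, hsum⟩ := PointedCone.mem_hull_range_iff.1 hmem
  exact ⟨b, hb, fun ic => by simpa using (congrFun hsum ic).symm⟩

/-- for all `j` and `t ≥ 0`, `w_j(t) − w_j(0)` lies in `cone(sgn(a_j) y₁ x₁, ..., sgn(a_j) y_n x_n)`. -/
theorem gradient_flow_cone_membership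
    (d n k : ℕ) (x : Fin n → Fin d → ℝ) (y : Fin n → ℝ)
    (hy : ∀ i, y i = 1 ∨ y i = -1)
    (hsep1 : ∀ i i', y i = y i' → 0 < dotp (x i) (x i'))
    (hsep2 : ∀ i i', y i ≠ y i' → dotp (x i) (x i') ≤ 0)
    (ℓ : ℝ → ℝ)
    (hℓ : (ℓ = fun u => Real.exp (-u)) ∨ (ℓ = fun u => Real.log (1 + Real.exp (-u))))
    (w : ℝ → Fin k → Fin d → ℝ) (a : ℝ → Fin k → ℝ)
    (w' : ℝ → Fin k → Fin d → ℝ) (a' : ℝ → Fin k → ℝ)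
    (hwInt : ∀ (j : Fin k) (i : Fin d) (t : ℝ),
      IntervalIntegrable (fun s => w' s j i) volume 0 t)
    (haInt : ∀ (j : Fin k) (t : ℝ), IntervalIntegrable (fun s => a' s j) volume 0 t)
    (hwFTC : ∀ (t : ℝ) (j : Fin k) (i : Fin d),
      w t j i = w 0 j i + ∫ s in (0:ℝ)..t, w' s j i)
    (haFTC : ∀ (t : ℝ) (j : Fin k), a t j = a 0 j + ∫ s in (0:ℝ)..t, a' s j)
    (hODE : ∀ᵐ t ∂(volume.restrict (Set.Ici (0:ℝ))),
      ∃ σ : Fin n → Fin k → ℝ,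
        (∀ i j, 0 ≤ σ i j ∧ σ i j ≤ 1) ∧
        (∀ i j, dotp (w t j) (x i) < 0 → σ i j = 0) ∧
        (∀ i j, 0 < dotp (w t j) (x i) → σ i j = 1) ∧
        (∀ j ic, w' t j ic =
          -∑ i, deriv ℓ (y i * net (w t) (a t) (x i)) * y i * a t j * σ i j * x i ic) ∧
        (∀ j, a' t j =
          -∑ i, deriv ℓ (y i * net (w t) (a t) (x i)) * y i * relu (dotp (w t j) (x i))))
    (hbal : ∀ j, |a 0 j| = norm2 (w 0 j) ∧ a 0 j ≠ 0)
    (hlive : ∀ s : ℝ, s = 1 ∨ s = -1 →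
      ∃ i j, y i = s ∧ 0 < y i * a 0 j * relu (dotp (w 0 j) (x i))) :
    ∀ (j : Fin k) (t : ℝ), 0 ≤ t →
      ∃ b : Fin n → ℝ, (∀ i, 0 ≤ b i) ∧
        ∀ ic, w t j ic - w 0 j ic = ∑ i, b i * (Real.sign (a 0 j) * y i * x i ic) :=
  gradient_flow_cone_membership_general d n k x y hy hsep1 hsep2 ℓ hℓ w a w' a' hwInt haInt hwFTC
    haFTC hODE hbal
end

section
/- For a gradient-flow trajectory of a two-layer ReLU network on an orthogonally separable dataset, starting from a balanced and live initialisation, with either the exponential or the logistic loss: for every i ∈ [n] there exists j ∈ [k] such that w_j(t)^T x_i → ∞ as t → ∞. -/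
open MeasureTheory Filter Finset

/-!
Fix a sample `x_i` of class `s`. While `s a_j ≥ 0`, orthogonal separability makes every
`w_jᵀ x_{i'}` with `y_{i'} = s` nondecreasing, and balancedness `|a_j| = ‖w_j‖`, which the flow
conserves, gives `w_jᵀ x_{i'} ≤ |a_j| ‖x_{i'}‖`. Hence a live neuron keeps the sign of its outer
weight forever, and a neuron whose outer weight vanishes stays dead.

Suppose that no `w_jᵀ x_i` tends to `∞`; being nondecreasing, they are bounded for the neurons
with `s a_j > 0`. Write `r_{i'} = -ℓ'(y_{i'} N_θ(x_{i'})) > 0`. For the live pair `(i₀, j₀)` of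
class `s`, the growth bound `d/dt w_{j₀}ᵀ x_i ≳ r_{i₀} ⟨x_{i₀}, x_i⟩` forces `∫ r_{i₀} < ∞`, so the
margin of `x_{i₀}` is unbounded and some neuron `j` has `s a_j ψ(w_jᵀ x_{i₀})`, hence `s a_j`,
unbounded. But the same argument gives `∫ r_{i'} < ∞` for every `x_{i'}` of class `s` that ever
activates `j`, and Grönwall applied to `s a_j' ≤ (∑ r_{i'} ‖x_{i'}‖) s a_j` bounds `s a_j`.
-/

lemma relu_nonneg (u : ℝ) : 0 ≤ relu u := le_max_right _ _

lemma relu_eq_zero {u : ℝ} (hu : u ≤ 0) : relu u = 0 := max_eq_right hu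

lemma pos_of_mul_relu_pos {b u : ℝ} (h : 0 < b * relu u) : 0 < b ∧ 0 < u := by
  have hb := pos_of_mul_pos_left h (relu_nonneg u)
  refine ⟨hb, lt_of_not_ge fun hu => ?_⟩
  rw [relu_eq_zero hu, mul_zero] at h
  exact h.false

lemma norm2_nonneg {m : ℕ} (v : Fin m → ℝ) : 0 ≤ norm2 v := Real.sqrt_nonneg _

lemma norm2_sq {m : ℕ} (v : Fin m → ℝ) : norm2 v ^ 2 = ∑ i, v i ^ 2 :=
  Real.sq_sqrt (sum_nonneg fun _ _ => sq_nonneg _)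

lemma norm2_pos_of_dotp_self_pos {m : ℕ} {v : Fin m → ℝ} (h : 0 < dotp v v) : 0 < norm2 v :=
  Real.sqrt_pos.2 (by simpa [dotp, sq] using h)

lemma dotp_le_norm2_mul_norm2 {m : ℕ} (u v : Fin m → ℝ) : dotp u v ≤ norm2 u * norm2 v := by
  have hsq : dotp u v ^ 2 ≤ (norm2 u * norm2 v) ^ 2 := by
    rw [mul_pow, norm2_sq, norm2_sq]
    exact sum_mul_sq_le_sq_mul_sq _ _ _
  exact le_of_sq_le_sq hsq (mul_nonneg (norm2_nonneg u) (norm2_nonneg v))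

lemma frequently_lt_of_not_isBoundedUnder {α β : Type*} [LinearOrder β] {l : Filter α}
    {f : α → β} (h : ¬IsBoundedUnder (· ≤ ·) l f) (b : β) : ∃ᶠ x in l, b < f x := fun hb =>
  h (isBoundedUnder_of_eventually_le (hb.mono fun _ => le_of_not_gt))

lemma tendsto_atTop_of_monotoneOn_of_not_isBoundedUnder {f : ℝ → ℝ} {a : ℝ}
    (hf : MonotoneOn f (Set.Ici a)) (h : ¬IsBoundedUnder (· ≤ ·) atTop f) :
    Tendsto f atTop atTop := by
  refine tendsto_atTop.2 fun b => ?_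
  obtain ⟨t₀, hb, ht₀⟩ :=
    ((frequently_lt_of_not_isBoundedUnder h b).and_eventually (eventually_ge_atTop a)).exists
  filter_upwards [eventually_ge_atTop t₀] with t ht
  exact hb.le.trans (hf ht₀ (ht₀.trans ht) ht)

/-- `u` is absolutely continuous with a.e. derivative `u'`, in integral form. -/
structure IsPrimitive (u u' : ℝ → ℝ) : Prop where
  intervalIntegrable : ∀ a b, IntervalIntegrable u' volume a b
  sub_eq_integral : ∀ a b, u b - u a = ∫ t in a..b, u' t

namespace IsPrimitive

variable {u v u' v' : ℝ → ℝ}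

lemma of_eq_add_integral (hint : ∀ t, IntervalIntegrable u' volume 0 t)
    (hu : ∀ t, u t = u 0 + ∫ s in (0:ℝ)..t, u' s) : IsPrimitive u u' := by
  refine ⟨fun a b => (hint a).symm.trans (hint b), fun a b => ?_⟩
  rw [hu a, hu b, ← intervalIntegral.integral_interval_sub_left (hint b) (hint a)]
  ring

lemma eq_add_integral (hu : IsPrimitive u u') (a : ℝ) :
    u = fun t => u a + ∫ s in a..t, u' s := by
  funext t
  rw [← hu.sub_eq_integral]
  ring

lemma continuous (hu : IsPrimitive u u') : Continuous u := by
  rw [hu.eq_add_integral 0]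
  exact continuous_const.add (intervalIntegral.continuous_primitive hu.intervalIntegrable 0)

lemma of_hasDerivAt (hd : ∀ t, HasDerivAt u (u' t) t) (hc : Continuous u') :
    IsPrimitive u u' :=
  ⟨fun _ _ => hc.intervalIntegrable _ _, fun _ _ =>
    (intervalIntegral.integral_eq_sub_of_hasDerivAt (fun t _ => hd t)
      (hc.intervalIntegrable _ _)).symm⟩

lemma integral (hc : Continuous u') : IsPrimitive (fun t => ∫ s in (0:ℝ)..t, u' s) u' :=
  of_hasDerivAt (fun t => (hc.integral_hasStrictDerivAt 0 t).hasDerivAt) hc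

lemma const (c : ℝ) : IsPrimitive (fun _ => c) fun _ => 0 :=
  of_hasDerivAt (fun _ => hasDerivAt_const _ _) continuous_const

lemma add (hu : IsPrimitive u u') (hv : IsPrimitive v v') :
    IsPrimitive (fun t => u t + v t) fun t => u' t + v' t := by
  refine ⟨fun a b => (hu.intervalIntegrable a b).add (hv.intervalIntegrable a b), fun a b => ?_⟩
  rw [intervalIntegral.integral_add (hu.intervalIntegrable a b) (hv.intervalIntegrable a b),
    ← hu.sub_eq_integral, ← hv.sub_eq_integral]
  ring

lemma const_mul (hu : IsPrimitive u u') (c : ℝ) :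
    IsPrimitive (fun t => c * u t) fun t => c * u' t := by
  refine ⟨fun a b => (hu.intervalIntegrable a b).const_mul c, fun a b => ?_⟩
  rw [intervalIntegral.integral_const_mul, ← hu.sub_eq_integral]
  ring

lemma mul_const (hu : IsPrimitive u u') (c : ℝ) :
    IsPrimitive (fun t => u t * c) fun t => u' t * c := by
  refine ⟨fun a b => (hu.intervalIntegrable a b).mul_const c, fun a b => ?_⟩
  rw [intervalIntegral.integral_mul_const, ← hu.sub_eq_integral]
  ring

lemma sum {ι : Type*} (s : Finset ι) {u u' : ι → ℝ → ℝ}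
    (hu : ∀ i ∈ s, IsPrimitive (u i) (u' i)) :
    IsPrimitive (fun t => ∑ i ∈ s, u i t) fun t => ∑ i ∈ s, u' i t := by
  classical
  induction s using Finset.induction_on with
  | empty => simpa using const 0
  | insert i s hi ih =>
    simp only [sum_insert hi]
    exact (hu i (mem_insert_self i s)).add (ih fun j hj => hu j (mem_insert_of_mem hj))

lemma ae_hasDerivAt (hu : IsPrimitive u u') (a b : ℝ) :
    ∀ᵐ t, t ∈ Set.uIcc a b → HasDerivAt u (u' t) t := by
  filter_upwards [(hu.intervalIntegrable a b).ae_hasDerivAt_integral] with t ht hmem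
  rw [hu.eq_add_integral a]
  exact (ht hmem a Set.left_mem_uIcc).const_add _

lemma absolutelyContinuousOnInterval (hu : IsPrimitive u u') (a b : ℝ) :
    AbsolutelyContinuousOnInterval u a b := by
  rw [hu.eq_add_integral a]
  exact (LipschitzWith.const (u a)).lipschitzOnWith.absolutelyContinuousOnInterval.add
    ((hu.intervalIntegrable a b).absolutelyContinuousOnInterval_intervalIntegral
      Set.left_mem_uIcc)

lemma mul (hu : IsPrimitive u u') (hv : IsPrimitive v v') :
    IsPrimitive (fun t => u t * v t) fun t => u' t * v t + u t * v' t := by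
  refine ⟨fun a b => ((hu.intervalIntegrable a b).mul_continuousOn hv.continuous.continuousOn).add
    ((hv.intervalIntegrable a b).continuousOn_mul hu.continuous.continuousOn), fun a b => ?_⟩
  rw [← ((hu.absolutelyContinuousOnInterval a b).fun_mul
    (hv.absolutelyContinuousOnInterval a b)).integral_deriv_eq_sub]
  refine intervalIntegral.integral_congr_ae ?_
  filter_upwards [hu.ae_hasDerivAt a b, hv.ae_hasDerivAt a b] with t hut hvt hmem
  exact ((hut (Set.uIoc_subset_uIcc hmem)).mul (hvt (Set.uIoc_subset_uIcc hmem))).deriv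

lemma sq (hu : IsPrimitive u u') : IsPrimitive (fun t => u t ^ 2) fun t => 2 * u t * u' t := by
  convert hu.mul hu using 1 <;> funext t <;> ring

lemma sub_le_sub_of_deriv_le (hu : IsPrimitive u u') (hv : IsPrimitive v v') {a b : ℝ}
    (hab : a ≤ b) (hle : ∀ᵐ t, t ∈ Set.Ioo a b → u' t ≤ v' t) : u b - u a ≤ v b - v a := by
  rw [hu.sub_eq_integral, hv.sub_eq_integral]
  refine intervalIntegral.integral_mono_ae_restrict hab (hu.intervalIntegrable a b)
    (hv.intervalIntegrable a b) ?_
  rw [← Measure.restrict_congr_set Ioo_ae_eq_Icc]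
  exact (ae_restrict_iff' measurableSet_Ioo).2 hle

lemma sub_eq_sub_of_deriv_eq (hu : IsPrimitive u u') (hv : IsPrimitive v v') {a b : ℝ}
    (hab : a ≤ b) (heq : ∀ᵐ t, t ∈ Set.Ioo a b → u' t = v' t) : u b - u a = v b - v a :=
  le_antisymm (hu.sub_le_sub_of_deriv_le hv hab (heq.mono fun _ h hmem => (h hmem).le))
    (hv.sub_le_sub_of_deriv_le hu hab (heq.mono fun _ h hmem => (h hmem).ge))

/-- Grönwall's inequality. -/
lemma le_mul_exp_integral (hu : IsPrimitive u u') {c : ℝ → ℝ} (hc : Continuous c) {a b : ℝ}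
    (hab : a ≤ b) (hle : ∀ᵐ t, t ∈ Set.Ioo a b → u' t ≤ c t * u t) :
    u b ≤ u a * Real.exp (∫ t in a..b, c t) := by
  set E : ℝ → ℝ := fun t => Real.exp (-∫ s in a..t, c s)
  have hE : IsPrimitive E fun t => -c t * E t := by
    refine of_hasDerivAt (fun t => ?_) (hc.neg.mul ?_)
    · simpa [E, mul_comm] using (hc.integral_hasStrictDerivAt a t).hasDerivAt.neg.exp
    · exact Real.continuous_exp.comp
        (intervalIntegral.continuous_primitive (fun _ _ => hc.intervalIntegrable _ _) a).neg
  -- `u * E` is nonincreasing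
  have hdecr := (hu.mul hE).sub_le_sub_of_deriv_le (const 0) hab <| by
    filter_upwards [hle] with t ht hmem
    nlinarith [ht hmem, Real.exp_pos (-∫ s in a..t, c s)]
  simp only [E, intervalIntegral.integral_same, neg_zero, Real.exp_zero, mul_one,
    sub_self] at hdecr
  rwa [Real.exp_neg, ← div_eq_mul_inv, sub_nonpos, div_le_iff₀ (Real.exp_pos _)] at hdecr

end IsPrimitive

structure IsAdmissibleLoss (ℓ : ℝ → ℝ) : Prop where
  continuous_deriv : Continuous (deriv ℓ)
  deriv_neg : ∀ u, deriv ℓ u < 0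
  monotone_deriv : Monotone (deriv ℓ)

lemma isAdmissibleLoss_exp : IsAdmissibleLoss fun u => Real.exp (-u) := by
  have h : deriv (fun u => Real.exp (-u)) = fun u => -Real.exp (-u) :=
    funext fun u => by simpa using (hasDerivAt_neg u).exp.deriv
  refine ⟨?_, ?_, ?_⟩ <;> rw [h]
  · fun_prop
  · exact fun u => neg_neg_of_pos (Real.exp_pos _)
  · exact fun u v huv => neg_le_neg (Real.exp_le_exp.2 (neg_le_neg huv))

lemma isAdmissibleLoss_logistic : IsAdmissibleLoss fun u => Real.log (1 + Real.exp (-u)) := by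
  have h : deriv (fun u => Real.log (1 + Real.exp (-u))) = fun u => -(1 + Real.exp u)⁻¹ := by
    funext u
    rw [(((hasDerivAt_neg u).exp.const_add 1).log (by positivity)).deriv, Real.exp_neg]
    field_simp
    ring
  refine ⟨?_, ?_, ?_⟩ <;> rw [h]
  · exact ((continuous_const.add Real.continuous_exp).inv₀ fun u =>
      (by positivity : (0:ℝ) < 1 + Real.exp u).ne').neg
  · exact fun u => neg_neg_of_pos (by positivity)
  · exact fun u v huv => neg_le_neg (inv_anti₀ (by positivity) (by gcongr))

/-- `(w', a')` is a velocity of the gradient-flow inclusion at `θ = (w, a)`; `σ i j` is the chosen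
element of the Clarke subdifferential `∂ψ(w_jᵀ x_i) ⊆ [0, 1]` of the ReLU. -/
def IsFlowVelocity {d n k : ℕ} (x : Fin n → Fin d → ℝ) (y : Fin n → ℝ) (ℓ : ℝ → ℝ)
    (w : Fin k → Fin d → ℝ) (a : Fin k → ℝ) (w' : Fin k → Fin d → ℝ) (a' : Fin k → ℝ) : Prop :=
  ∃ σ : Fin n → Fin k → ℝ,
    (∀ i j, 0 ≤ σ i j ∧ σ i j ≤ 1) ∧
    (∀ i j, dotp (w j) (x i) < 0 → σ i j = 0) ∧
    (∀ i j, 0 < dotp (w j) (x i) → σ i j = 1) ∧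
    (∀ j c, w' j c = -∑ i, deriv ℓ (y i * net w a (x i)) * y i * a j * σ i j * x i c) ∧
    (∀ j, a' j = -∑ i, deriv ℓ (y i * net w a (x i)) * y i * relu (dotp (w j) (x i)))

structure GradientFlow (d n k : ℕ) where
  x : Fin n → Fin d → ℝ
  y : Fin n → ℝ
  ℓ : ℝ → ℝ
  w : ℝ → Fin k → Fin d → ℝ
  a : ℝ → Fin k → ℝ
  w' : ℝ → Fin k → Fin d → ℝ
  a' : ℝ → Fin k → ℝ
  label_cases : ∀ i, y i = 1 ∨ y i = -1
  dotp_pos_of_label_eq : ∀ i i', y i = y i' → 0 < dotp (x i) (x i')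
  dotp_nonpos_of_label_ne : ∀ i i', y i ≠ y i' → dotp (x i) (x i') ≤ 0
  isAdmissibleLoss : IsAdmissibleLoss ℓ
  isPrimitive_w : ∀ j c, IsPrimitive (fun t => w t j c) fun t => w' t j c
  isPrimitive_a : ∀ j, IsPrimitive (fun t => a t j) fun t => a' t j
  balanced : ∀ j, |a 0 j| = norm2 (w 0 j)
  ae_isFlowVelocity : ∀ᵐ t ∂(volume.restrict (Set.Ici 0)),
    IsFlowVelocity x y ℓ (w t) (a t) (w' t) (a' t)

namespace GradientFlow

variable {d n k : ℕ} (F : GradientFlow d n k)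

def IsFlowTime (t : ℝ) : Prop := IsFlowVelocity F.x F.y F.ℓ (F.w t) (F.a t) (F.w' t) (F.a' t)

noncomputable def preact (j : Fin k) (i : Fin n) (t : ℝ) : ℝ := dotp (F.w t j) (F.x i)

noncomputable def preact' (j : Fin k) (i : Fin n) (t : ℝ) : ℝ := dotp (F.w' t j) (F.x i)

noncomputable def margin (i : Fin n) (t : ℝ) : ℝ := F.y i * net (F.w t) (F.a t) (F.x i)

noncomputable def residual (i : Fin n) (t : ℝ) : ℝ := -deriv F.ℓ (F.margin i t)

def KeepsSign (s : ℝ) (j : Fin k) : Prop := ∀ t, 0 ≤ t → 0 < s * F.a t j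

lemma ae_isFlowTime : ∀ᵐ t, 0 ≤ t → F.IsFlowTime t :=
  (ae_restrict_iff' measurableSet_Ici).1 F.ae_isFlowVelocity

lemma label_mul_self (i : Fin n) : F.y i * F.y i = 1 := by
  rcases F.label_cases i with h | h <;> rw [h] <;> norm_num

lemma label_ne_zero (i : Fin n) : F.y i ≠ 0 := by
  rcases F.label_cases i with h | h <;> norm_num [h]

lemma label_ne_neg (i : Fin n) : F.y i ≠ -F.y i := by
  rcases F.label_cases i with h | h <;> norm_num [h]

lemma label_eq_or_eq_neg (i i' : Fin n) : F.y i' = F.y i ∨ F.y i' = -F.y i := by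
  rcases F.label_cases i with h | h <;> rcases F.label_cases i' with h' | h' <;> norm_num [h, h']

/-- Orthogonal separability in signed form. -/
lemma label_mul_dotp_nonneg (i i' : Fin n) : 0 ≤ F.y i' * F.y i * dotp (F.x i') (F.x i) := by
  rcases F.label_eq_or_eq_neg i i' with h | h
  · rw [h, F.label_mul_self, one_mul]
    exact (F.dotp_pos_of_label_eq i' i h).le
  · rw [h, neg_mul, F.label_mul_self]
    linarith [F.dotp_nonpos_of_label_ne i' i (h ▸ (F.label_ne_neg i).symm)]

lemma abs_label (i : Fin n) : |F.y i| = 1 := by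
  rcases F.label_cases i with h | h <;> norm_num [h]

lemma abs_eq_label_mul {i : Fin n} {v : ℝ} (hv : 0 < F.y i * v) : |v| = F.y i * v := by
  rw [← abs_of_pos hv, abs_mul, F.abs_label, one_mul]

lemma norm2_x_pos (i : Fin n) : 0 < norm2 (F.x i) :=
  norm2_pos_of_dotp_self_pos (F.dotp_pos_of_label_eq i i rfl)

lemma isPrimitive_preact (j : Fin k) (i : Fin n) : IsPrimitive (F.preact j i) (F.preact' j i) :=
  IsPrimitive.sum univ fun c _ => (F.isPrimitive_w j c).mul_const (F.x i c)

lemma continuous_a (j : Fin k) : Continuous fun t => F.a t j := (F.isPrimitive_a j).continuous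

lemma continuous_margin (i : Fin n) : Continuous (F.margin i) :=
  continuous_const.mul <| continuous_finsetSum _ fun j _ =>
    (F.continuous_a j).mul ((F.isPrimitive_preact j i).continuous.max continuous_const)

lemma continuous_residual (i : Fin n) : Continuous (F.residual i) :=
  (F.isAdmissibleLoss.continuous_deriv.comp (F.continuous_margin i)).neg

lemma residual_pos (i : Fin n) (t : ℝ) : 0 < F.residual i t :=
  neg_pos.2 (F.isAdmissibleLoss.deriv_neg _)

lemma margin_eq_sum (i : Fin n) (t : ℝ) :
    F.margin i t = ∑ j, F.y i * F.a t j * relu (F.preact j i t) := by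
  rw [margin, net, mul_sum]
  simp only [preact, mul_assoc]

namespace IsFlowTime

variable {F} {t : ℝ}

lemma a'_eq (hG : F.IsFlowTime t) (j : Fin k) :
    F.a' t j = ∑ i, F.residual i t * F.y i * relu (F.preact j i t) := by
  obtain ⟨-, -, -, -, -, ha'⟩ := hG
  rw [ha' j, ← sum_neg_distrib]
  simp only [residual, margin, preact, neg_mul]

lemma exists_preact'_eq (hG : F.IsFlowTime t) (j : Fin k) (i : Fin n) :
    ∃ σ : Fin n → ℝ, (∀ i', 0 ≤ σ i') ∧ (∀ i', 0 < F.preact j i' t → σ i' = 1) ∧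
      F.preact' j i t = F.y i * F.a t j *
        ∑ i', F.residual i' t * σ i' * (F.y i' * F.y i * dotp (F.x i') (F.x i)) := by
  obtain ⟨σ, hσ, -, hσ1, hw', -⟩ := hG
  refine ⟨fun i' => σ i' j, fun i' => (hσ i' j).1, fun i' => hσ1 i' j, ?_⟩
  simp only [preact', dotp, hw', residual, margin, mul_sum, sum_mul, neg_mul,
    mul_neg, sum_neg_distrib, neg_inj]
  rw [sum_comm]
  refine sum_congr rfl fun i' _ => sum_congr rfl fun c _ => ?_
  linear_combination (-deriv F.ℓ (F.y i' * net (F.w t) (F.a t) (F.x i')) * F.y i' * F.a t j *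
    σ i' j * F.x i' c * F.x i c) * F.label_mul_self i

lemma preact'_nonneg (hG : F.IsFlowTime t) {j : Fin k} {i : Fin n} (ha : 0 ≤ F.y i * F.a t j) :
    0 ≤ F.preact' j i t := by
  obtain ⟨σ, hσ, -, heq⟩ := hG.exists_preact'_eq j i
  rw [heq]
  exact mul_nonneg ha (sum_nonneg fun i' _ => mul_nonneg
    (mul_nonneg (F.residual_pos i' t).le (hσ i')) (F.label_mul_dotp_nonneg i i'))

lemma preact'_ge (hG : F.IsFlowTime t) {j : Fin k} {i i' : Fin n} (ha : 0 ≤ F.y i * F.a t j)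
    (hsame : F.y i' = F.y i) (hpos : 0 < F.preact j i' t) :
    F.y i * F.a t j * (F.residual i' t * dotp (F.x i') (F.x i)) ≤ F.preact' j i t := by
  obtain ⟨σ, hσ, hσ1, heq⟩ := hG.exists_preact'_eq j i
  rw [heq]
  refine mul_le_mul_of_nonneg_left ?_ ha
  convert single_le_sum (fun i'' _ => mul_nonneg (mul_nonneg (F.residual_pos i'' t).le
    (hσ i'')) (F.label_mul_dotp_nonneg i i'')) (mem_univ i') using 1
  rw [hσ1 i' hpos, hsame, F.label_mul_self, mul_one, one_mul]

lemma abs_a'_le (hG : F.IsFlowTime t) (j : Fin k) :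
    |F.a' t j| ≤ ∑ i, F.residual i t * relu (F.preact j i t) := by
  rw [hG.a'_eq]
  refine (abs_sum_le_sum_abs _ _).trans (sum_le_sum fun i _ => ?_)
  rw [abs_mul, abs_mul, F.abs_label, mul_one, abs_of_pos (F.residual_pos i t),
    abs_of_nonneg (relu_nonneg _)]

lemma label_mul_a'_le (hG : F.IsFlowTime t) (j : Fin k) (i : Fin n) :
    F.y i * F.a' t j ≤
      ∑ i' with F.y i' = F.y i, F.residual i' t * relu (F.preact j i' t) := by
  rw [hG.a'_eq, mul_sum, sum_filter]
  refine sum_le_sum fun i' _ => ?_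
  have hr := mul_nonneg (F.residual_pos i' t).le (relu_nonneg (F.preact j i' t))
  rcases F.label_eq_or_eq_neg i i' with h | h
  · rw [if_pos h, h]
    linear_combination (F.residual i' t * relu (F.preact j i' t)) * F.label_mul_self i
  · rw [if_neg (h ▸ (F.label_ne_neg i).symm), h]
    nlinarith [F.label_mul_self i]

/-- Positive homogeneity of the ReLU: `σ · u = ψ(u)` for every subgradient `σ ∈ ∂ψ(u)`. -/
lemma sum_w'_mul_w (hG : F.IsFlowTime t) (j : Fin k) :
    ∑ c, F.w' t j c * F.w t j c = F.a' t j * F.a t j := by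
  obtain ⟨σ, -, hσ0, hσ1, hw', ha'⟩ := hG
  have hσ : ∀ i, σ i j * dotp (F.w t j) (F.x i) = relu (dotp (F.w t j) (F.x i)) := by
    intro i
    rcases lt_trichotomy (dotp (F.w t j) (F.x i)) 0 with h | h | h
    · rw [hσ0 i j h, zero_mul, relu_eq_zero h.le]
    · rw [h, mul_zero, relu_eq_zero le_rfl]
    · rw [hσ1 i j h, one_mul, relu, max_eq_left h.le]
  rw [ha' j]
  simp_rw [← hσ]
  simp only [hw', dotp, neg_mul, sum_mul, mul_sum, sum_neg_distrib, neg_inj]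
  rw [sum_comm]
  refine sum_congr rfl fun i _ => sum_congr rfl fun c _ => ?_
  ring

end IsFlowTime

/-- `d/dt (a_j² - ‖w_j‖²) = 0` a.e., so balancedness is conserved. -/
lemma sq_a_eq_sum_sq_w (j : Fin k) {t : ℝ} (ht : 0 ≤ t) :
    F.a t j ^ 2 = ∑ c, F.w t j c ^ 2 := by
  have hcons := (F.isPrimitive_a j).sq.sub_eq_sub_of_deriv_eq
    (IsPrimitive.sum univ fun c _ => (F.isPrimitive_w j c).sq) ht <| by
      filter_upwards [F.ae_isFlowTime] with τ hτ hmem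
      simp only [mul_assoc, ← mul_sum, mul_comm (F.w τ j _),
        (hτ hmem.1.le).sum_w'_mul_w, mul_comm (F.a' τ j)]
  have h0 : F.a 0 j ^ 2 = ∑ c, F.w 0 j c ^ 2 := by rw [← sq_abs, F.balanced, norm2_sq]
  linarith

lemma norm2_w (j : Fin k) {t : ℝ} (ht : 0 ≤ t) : norm2 (F.w t j) = |F.a t j| := by
  rw [norm2, ← F.sq_a_eq_sum_sq_w j ht, Real.sqrt_sq_eq_abs]

lemma preact_le (j : Fin k) (i : Fin n) {t : ℝ} (ht : 0 ≤ t) :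
    F.preact j i t ≤ |F.a t j| * norm2 (F.x i) :=
  F.norm2_w j ht ▸ dotp_le_norm2_mul_norm2 _ _

lemma relu_preact_le (j : Fin k) (i : Fin n) {t : ℝ} (ht : 0 ≤ t) :
    relu (F.preact j i t) ≤ |F.a t j| * norm2 (F.x i) :=
  max_le (F.preact_le j i ht) (mul_nonneg (abs_nonneg _) (norm2_nonneg _))

/-- Grönwall for `a_j²`, using `|a_j'| ≤ (∑ r_i ‖x_i‖) |a_j|`. -/
lemma a_eq_zero_of_eq_zero (j : Fin k) {t₀ t : ℝ} (ht₀ : 0 ≤ t₀) (hz : F.a t₀ j = 0)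
    (ht : t₀ ≤ t) : F.a t j = 0 := by
  have hc : Continuous fun τ => 2 * ∑ i, F.residual i τ * norm2 (F.x i) :=
    continuous_const.mul (continuous_finsetSum _ fun i _ =>
      (F.continuous_residual i).mul continuous_const)
  have hgron := (F.isPrimitive_a j).sq.le_mul_exp_integral hc ht <| by
    filter_upwards [F.ae_isFlowTime] with τ hτ hmem
    have hτ0 : 0 ≤ τ := ht₀.trans hmem.1.le
    have ha' : |F.a' τ j| ≤ (∑ i, F.residual i τ * norm2 (F.x i)) * |F.a τ j| := by
      refine ((hτ hτ0).abs_a'_le j).trans ?_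
      rw [sum_mul]
      exact sum_le_sum fun i _ => by
        nlinarith [F.relu_preact_le j i hτ0, F.residual_pos i τ]
    calc 2 * F.a τ j * F.a' τ j ≤ 2 * |F.a τ j| * |F.a' τ j| := by
          rw [mul_assoc, mul_assoc, ← abs_mul]
          exact mul_le_mul_of_nonneg_left (le_abs_self _) zero_le_two
      _ ≤ 2 * |F.a τ j| * ((∑ i, F.residual i τ * norm2 (F.x i)) * |F.a τ j|) := by
          gcongr
      _ = _ := by rw [← sq_abs (F.a τ j)]; ring
  rw [hz, zero_pow two_ne_zero, zero_mul] at hgron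
  exact pow_eq_zero_iff two_ne_zero |>.1 (le_antisymm hgron (sq_nonneg _))

lemma preact_le_preact {j : Fin k} {i : Fin n} {t₁ t₂ : ℝ} (ht₁ : 0 ≤ t₁) (h₁₂ : t₁ ≤ t₂)
    (hsign : ∀ t ∈ Set.Ioo t₁ t₂, 0 ≤ F.y i * F.a t j) : F.preact j i t₁ ≤ F.preact j i t₂ := by
  have := (IsPrimitive.const 0).sub_le_sub_of_deriv_le (F.isPrimitive_preact j i) h₁₂ <| by
    filter_upwards [F.ae_isFlowTime] with τ hτ hmem
    exact (hτ (ht₁.trans hmem.1.le)).preact'_nonneg (hsign τ hmem)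
  linarith

variable {F} in
lemma KeepsSign.monotoneOn_preact {i : Fin n} {j : Fin k}
    (hK : F.KeepsSign (F.y i) j) : MonotoneOn (F.preact j i) (Set.Ici 0) :=
  fun _ ht₁ _ _ h₁₂ => F.preact_le_preact ht₁ h₁₂ fun τ hτ =>
    (hK τ (ht₁.trans hτ.1.le)).le

/-- If the sign were lost, at the first time `τ` with `y_i a_j(τ) ≤ 0` we would have `a_j(τ) = 0`,
while `w_jᵀ x_i`, nondecreasing on `[0, τ]`, is still positive; but `w_jᵀ x_i ≤ |a_j| ‖x_i‖`. -/
lemma keepsSign_of_pos {i : Fin n} {j : Fin k} (ha : 0 < F.y i * F.a 0 j)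
    (hpre : 0 < F.preact j i 0) : F.KeepsSign (F.y i) j := by
  unfold KeepsSign
  by_contra! ⟨t₁, ht₁, hle⟩
  have hcont : Continuous fun t => F.y i * F.a t j := continuous_const.mul (F.continuous_a j)
  set Z := {t | 0 ≤ t ∧ F.y i * F.a t j ≤ 0}
  have hZ : IsClosed Z := isClosed_Ici.inter (isClosed_le hcont continuous_const)
  have hZbdd : BddBelow Z := ⟨0, fun _ ht => ht.1⟩
  have hτ : sInf Z ∈ Z := hZ.csInf_mem ⟨t₁, ht₁, hle⟩ hZbdd
  obtain ⟨τ₀, hτ₀, hzero⟩ := intermediate_value_Icc' hτ.1 hcont.continuousOn ⟨hτ.2, ha.le⟩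
  have hτ₀eq : τ₀ = sInf Z := le_antisymm hτ₀.2 (csInf_le hZbdd ⟨hτ₀.1, hzero.le⟩)
  have haτ : F.a (sInf Z) j = 0 := by
    rw [← hτ₀eq]
    exact (mul_eq_zero.1 hzero).resolve_left (F.label_ne_zero i)
  have hmono := F.preact_le_preact le_rfl hτ.1 fun t ht =>
    le_of_lt (not_le.1 fun hle => (csInf_le hZbdd ⟨ht.1.le, hle⟩).not_gt ht.2)
  have := F.preact_le j i hτ.1
  rw [haτ, abs_zero, zero_mul] at this
  linarith

lemma keepsSign_of_frequently {s : ℝ} {j : Fin k} (h : ∃ᶠ t in atTop, 0 < s * F.a t j) :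
    F.KeepsSign s j := by
  intro t ht
  by_contra! hle
  obtain ⟨t₂, ht₂, hpos⟩ := frequently_atTop.1 h t
  have hcont : Continuous fun t => s * F.a t j := continuous_const.mul (F.continuous_a j)
  obtain ⟨τ, hτ, hzero⟩ := intermediate_value_Icc ht₂ hcont.continuousOn ⟨hle, hpos.le⟩
  have haτ : F.a τ j = 0 := (mul_eq_zero.1 hzero).resolve_left (left_ne_zero_of_mul hpos.ne')
  rw [F.a_eq_zero_of_eq_zero j (ht.trans hτ.1) haτ hτ.2, mul_zero] at hpos
  exact hpos.false

/-- While `w_jᵀ x_{i'} ≥ c > 0`, the pre-activation of any `x_i` of the same class grows at rate at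
least `c / ‖x_{i'}‖ · ⟨x_{i'}, x_i⟩ · r_{i'}`; so a bounded `w_jᵀ x_i` forces `∫ r_{i'} < ∞`. -/
lemma isBoundedUnder_integral_residual {i i' : Fin n} {j : Fin k} (hK : F.KeepsSign (F.y i) j)
    (hsame : F.y i' = F.y i) {T : ℝ} (hT : 0 ≤ T) (hpos : 0 < F.preact j i' T)
    (hbdd : IsBoundedUnder (· ≤ ·) atTop (F.preact j i)) :
    IsBoundedUnder (· ≤ ·) atTop fun t => ∫ τ in (0:ℝ)..t, F.residual i' τ := by
  set β := F.preact j i' T / norm2 (F.x i')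
  set δ := dotp (F.x i') (F.x i)
  have hβ : 0 < β := div_pos hpos (F.norm2_x_pos i')
  have hδ : 0 < δ := F.dotp_pos_of_label_eq i' i hsame
  have hgrowth : ∀ t, T ≤ t → (∫ τ in (0:ℝ)..t, F.residual i' τ) * (β * δ) -
      (∫ τ in (0:ℝ)..T, F.residual i' τ) * (β * δ) ≤ F.preact j i t - F.preact j i T := by
    intro t hTt
    refine ((IsPrimitive.integral (F.continuous_residual i')).mul_const _).sub_le_sub_of_deriv_le
      (F.isPrimitive_preact j i) hTt ?_
    filter_upwards [F.ae_isFlowTime] with τ hτ hmem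
    have hτ0 : 0 ≤ τ := hT.trans hmem.1.le
    have hpre : F.preact j i' T ≤ F.preact j i' τ :=
      (hsame ▸ hK).monotoneOn_preact hT hτ0 hmem.1.le
    have hβa : β ≤ F.y i * F.a τ j := by
      rw [div_le_iff₀ (F.norm2_x_pos i'), ← F.abs_eq_label_mul (hK τ hτ0)]
      exact hpre.trans (F.preact_le j i' hτ0)
    calc F.residual i' τ * (β * δ) ≤ F.y i * F.a τ j * (F.residual i' τ * δ) := by
          nlinarith [mul_pos (F.residual_pos i' τ) hδ]
      _ ≤ F.preact' j i τ := (hτ hτ0).preact'_ge (hK τ hτ0).le hsame (hpos.trans_le hpre)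
  obtain ⟨H, hH⟩ := hbdd
  refine isBoundedUnder_of_eventually_le
    (a := (∫ τ in (0:ℝ)..T, F.residual i' τ) + (H - F.preact j i T) / (β * δ)) ?_
  filter_upwards [eventually_map.1 hH, eventually_ge_atTop T] with t hHt hTt
  have := (le_div_iff₀ (mul_pos hβ hδ)).2 (by linarith [hgrowth t hTt] :
    ((∫ τ in (0:ℝ)..t, F.residual i' τ) - ∫ τ in (0:ℝ)..T, F.residual i' τ) * (β * δ) ≤
      H - F.preact j i T)
  linarith

/-- If the margin stayed bounded, the residual would stay bounded away from `0`. -/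
lemma not_isBoundedUnder_margin {i : Fin n}
    (hR : IsBoundedUnder (· ≤ ·) atTop fun t => ∫ τ in (0:ℝ)..t, F.residual i τ) :
    ¬IsBoundedUnder (· ≤ ·) atTop (F.margin i) := by
  rintro ⟨G, hG⟩
  obtain ⟨T, hT⟩ := eventually_atTop.1 (eventually_map.1 hG)
  set ρ := -deriv F.ℓ G
  have hρ : 0 < ρ := neg_pos.2 (F.isAdmissibleLoss.deriv_neg G)
  have hlower : ∀ t, T ≤ t → (∫ τ in (0:ℝ)..T, F.residual i τ) + ρ * (t - T) ≤
      ∫ τ in (0:ℝ)..t, F.residual i τ := by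
    intro t hTt
    have := intervalIntegral.integral_mono_on hTt (intervalIntegrable_const (μ := volume))
      ((F.continuous_residual i).intervalIntegrable T t)
      fun τ hτ => neg_le_neg (F.isAdmissibleLoss.monotone_deriv (hT τ hτ.1))
    rw [intervalIntegral.integral_const, smul_eq_mul,
      ← (IsPrimitive.integral (F.continuous_residual i)).sub_eq_integral] at this
    linarith
  have htend : Tendsto (fun t => (∫ τ in (0:ℝ)..T, F.residual i τ) + ρ * (t - T)) atTop atTop :=
    tendsto_atTop_add_const_left _ _
      ((tendsto_atTop_add_const_right _ _ tendsto_id).const_mul_atTop hρ)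
  exact not_isBoundedUnder_of_tendsto_atTop
    (tendsto_atTop_mono' _ ((eventually_ge_atTop T).mono hlower) htend) hR

lemma not_isBoundedUnder_label_mul_a {i : Fin n} {j : Fin k} (hK : F.KeepsSign (F.y i) j)
    (h : ¬IsBoundedUnder (· ≤ ·) atTop fun t => F.y i * F.a t j * relu (F.preact j i t)) :
    ¬IsBoundedUnder (· ≤ ·) atTop fun t => F.y i * F.a t j := by
  rintro ⟨K, hK'⟩
  refine h (isBoundedUnder_of_eventually_le (a := K * (K * norm2 (F.x i))) ?_)
  filter_upwards [eventually_map.1 hK', eventually_ge_atTop 0] with t hKt ht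
  have hpos := hK t ht
  have hrelu := F.relu_preact_le j i ht
  rw [F.abs_eq_label_mul hpos] at hrelu
  have hx := norm2_nonneg (F.x i)
  calc F.y i * F.a t j * relu (F.preact j i t)
      ≤ F.y i * F.a t j * (F.y i * F.a t j * norm2 (F.x i)) :=
        mul_le_mul_of_nonneg_left hrelu hpos.le
    _ ≤ K * (K * norm2 (F.x i)) := by gcongr; linarith

/-- Only the samples `x_{i'}` of the class of `x_i` that ever activate `j` feed `a_j`, each at rate
`≤ r_{i'} ‖x_{i'}‖ |a_j|` with `∫ r_{i'} < ∞`; Grönwall then bounds `a_j`. -/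
lemma isBoundedUnder_label_mul_a {i : Fin n} {j : Fin k} (hK : F.KeepsSign (F.y i) j)
    (hbdd : IsBoundedUnder (· ≤ ·) atTop (F.preact j i)) :
    IsBoundedUnder (· ≤ ·) atTop fun t => F.y i * F.a t j := by
  classical
  set S := univ.filter fun i' => F.y i' = F.y i ∧ ∃ T, 0 ≤ T ∧ 0 < F.preact j i' T
  have hR : ∀ i' ∈ S, ∃ M, ∀ᶠ t in atTop, ∫ τ in (0:ℝ)..t, F.residual i' τ ≤ M := by
    intro i' hi'
    obtain ⟨hsame, T, hT, hpos⟩ := (mem_filter.1 hi').2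
    obtain ⟨M, hM⟩ := F.isBoundedUnder_integral_residual hK hsame hT hpos hbdd
    exact ⟨M, eventually_map.1 hM⟩
  choose! M hM using hR
  set c : ℝ → ℝ := fun τ => ∑ i' ∈ S, F.residual i' τ * norm2 (F.x i')
  have hc : Continuous c :=
    continuous_finsetSum _ fun i' _ => (F.continuous_residual i').mul continuous_const
  have hrate : ∀ τ, 0 ≤ τ → F.IsFlowTime τ → F.y i * F.a' τ j ≤ c τ * (F.y i * F.a τ j) := by
    intro τ hτ0 hτ
    have hout : ∀ i' ∈ univ.filter (F.y · = F.y i), i' ∉ S →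
        F.residual i' τ * relu (F.preact j i' τ) = 0 := fun i' hi' hS => by
      rw [relu_eq_zero (not_lt.1 fun hpos => hS (mem_filter.2
        ⟨mem_univ _, (mem_filter.1 hi').2, τ, hτ0, hpos⟩)), mul_zero]
    calc F.y i * F.a' τ j
        ≤ ∑ i' with F.y i' = F.y i, F.residual i' τ * relu (F.preact j i' τ) :=
          hτ.label_mul_a'_le j i
      _ = ∑ i' ∈ S, F.residual i' τ * relu (F.preact j i' τ) :=
          (sum_subset (fun i' hi' => mem_filter.2 ⟨mem_univ _, (mem_filter.1 hi').2.1⟩) hout).symm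
      _ ≤ ∑ i' ∈ S, F.residual i' τ * (norm2 (F.x i') * (F.y i * F.a τ j)) :=
          sum_le_sum fun i' _ => mul_le_mul_of_nonneg_left
            ((F.relu_preact_le j i' hτ0).trans_eq (by rw [F.abs_eq_label_mul (hK τ hτ0), mul_comm]))
            (F.residual_pos i' τ).le
      _ = c τ * (F.y i * F.a τ j) := by simp only [c, sum_mul, mul_assoc]
  have hgron : ∀ t, 0 ≤ t → F.y i * F.a t j ≤ F.y i * F.a 0 j * Real.exp (∫ τ in (0:ℝ)..t, c τ) :=
    fun t ht => ((F.isPrimitive_a j).const_mul (F.y i)).le_mul_exp_integral hc ht <| by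
      filter_upwards [F.ae_isFlowTime] with τ hτ hmem
      exact hrate τ hmem.1.le (hτ hmem.1.le)
  refine isBoundedUnder_of_eventually_le
    (a := F.y i * F.a 0 j * Real.exp (∑ i' ∈ S, M i' * norm2 (F.x i'))) ?_
  filter_upwards [(eventually_all_finset S).2 hM, eventually_ge_atTop 0] with t hMt ht
  refine (hgron t ht).trans (mul_le_mul_of_nonneg_left (Real.exp_le_exp.2 ?_) (hK 0 le_rfl).le)
  have hint : ∫ τ in (0:ℝ)..t, c τ =
      ∑ i' ∈ S, (∫ τ in (0:ℝ)..t, F.residual i' τ) * norm2 (F.x i') := by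
    simp only [c]
    rw [intervalIntegral.integral_finsetSum (f := fun i' τ => F.residual i' τ * norm2 (F.x i'))
      fun i' _ => ((F.continuous_residual i').mul continuous_const).intervalIntegrable _ _]
    simp only [intervalIntegral.integral_mul_const]
  rw [hint]
  exact sum_le_sum fun i' hi' => mul_le_mul_of_nonneg_right (hMt i' hi') (norm2_nonneg _)

lemma exists_tendsto_preact (i : Fin n)
    (hlive : ∃ i₀ j₀, F.y i₀ = F.y i ∧ 0 < F.y i₀ * F.a 0 j₀ * relu (F.preact j₀ i₀ 0)) :
    ∃ j, Tendsto (F.preact j i) atTop atTop := by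
  obtain ⟨i₀, j₀, hy₀, hlive⟩ := hlive
  obtain ⟨ha₀, hpre₀⟩ := pos_of_mul_relu_pos hlive
  by_contra! hnt
  have hbdd : ∀ j, F.KeepsSign (F.y i) j → IsBoundedUnder (· ≤ ·) atTop (F.preact j i) :=
    fun j hK => by_contra fun h =>
      hnt j (tendsto_atTop_of_monotoneOn_of_not_isBoundedUnder hK.monotoneOn_preact h)
  have hK₀ : F.KeepsSign (F.y i₀) j₀ := F.keepsSign_of_pos ha₀ hpre₀
  have hmargin : ¬IsBoundedUnder (· ≤ ·) atTop (F.margin i₀) :=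
    F.not_isBoundedUnder_margin <|
      F.isBoundedUnder_integral_residual (hy₀ ▸ hK₀) hy₀ le_rfl hpre₀ (hbdd j₀ (hy₀ ▸ hK₀))
  obtain ⟨j, hj⟩ : ∃ j, ¬IsBoundedUnder (· ≤ ·) atTop
      fun t => F.y i₀ * F.a t j * relu (F.preact j i₀ t) := by
    by_contra! h
    exact hmargin (by simpa only [funext (F.margin_eq_sum i₀), sum_fn] using
      isBoundedUnder_le_sum univ fun j _ => h j)
  have hK : F.KeepsSign (F.y i₀) j := F.keepsSign_of_frequently <|
    (frequently_lt_of_not_isBoundedUnder hj 0).mono fun _ h => (pos_of_mul_relu_pos h).1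
  exact F.not_isBoundedUnder_label_mul_a hK hj
    (hy₀ ▸ F.isBoundedUnder_label_mul_a (hy₀ ▸ hK) (hbdd j (hy₀ ▸ hK)))

end GradientFlow

/-- for every `i` there exists `j` such that `w_j(t)ᵀ x_i → ∞` as `t → ∞`. -/
theorem gradient_flow_some_neuron_to_infinity
    (d n k : ℕ) (x : Fin n → Fin d → ℝ) (y : Fin n → ℝ)
    (hy : ∀ i, y i = 1 ∨ y i = -1)
    (hsep1 : ∀ i i', y i = y i' → 0 < dotp (x i) (x i'))
    (hsep2 : ∀ i i', y i ≠ y i' → dotp (x i) (x i') ≤ 0)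
    (ℓ : ℝ → ℝ)
    (hℓ : (ℓ = fun u => Real.exp (-u)) ∨ (ℓ = fun u => Real.log (1 + Real.exp (-u))))
    (w : ℝ → Fin k → Fin d → ℝ) (a : ℝ → Fin k → ℝ)
    (w' : ℝ → Fin k → Fin d → ℝ) (a' : ℝ → Fin k → ℝ)
    (hwInt : ∀ (j : Fin k) (i : Fin d) (t : ℝ),
      IntervalIntegrable (fun s => w' s j i) volume 0 t)
    (haInt : ∀ (j : Fin k) (t : ℝ), IntervalIntegrable (fun s => a' s j) volume 0 t)
    (hwFTC : ∀ (t : ℝ) (j : Fin k) (i : Fin d),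
      w t j i = w 0 j i + ∫ s in (0:ℝ)..t, w' s j i)
    (haFTC : ∀ (t : ℝ) (j : Fin k), a t j = a 0 j + ∫ s in (0:ℝ)..t, a' s j)
    (hODE : ∀ᵐ t ∂(volume.restrict (Set.Ici (0:ℝ))),
      ∃ σ : Fin n → Fin k → ℝ,
        (∀ i j, 0 ≤ σ i j ∧ σ i j ≤ 1) ∧
        (∀ i j, dotp (w t j) (x i) < 0 → σ i j = 0) ∧
        (∀ i j, 0 < dotp (w t j) (x i) → σ i j = 1) ∧
        (∀ j ic, w' t j ic =
          -∑ i, deriv ℓ (y i * net (w t) (a t) (x i)) * y i * a t j * σ i j * x i ic) ∧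
        (∀ j, a' t j =
          -∑ i, deriv ℓ (y i * net (w t) (a t) (x i)) * y i * relu (dotp (w t j) (x i))))
    (hbal : ∀ j, |a 0 j| = norm2 (w 0 j) ∧ a 0 j ≠ 0)
    (hlive : ∀ s : ℝ, s = 1 ∨ s = -1 →
      ∃ i j, y i = s ∧ 0 < y i * a 0 j * relu (dotp (w 0 j) (x i))) :
    ∀ i : Fin n, ∃ j : Fin k, Tendsto (fun t => dotp (w t j) (x i)) atTop atTop := by
  have hloss : IsAdmissibleLoss ℓ := by
    rcases hℓ with rfl | rfl
    exacts [isAdmissibleLoss_exp, isAdmissibleLoss_logistic]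
  let F : GradientFlow d n k :=
    { x, y, ℓ, w, a, w', a'
      label_cases := hy
      dotp_pos_of_label_eq := hsep1
      dotp_nonpos_of_label_ne := hsep2
      isAdmissibleLoss := hloss
      isPrimitive_w := fun j c => .of_eq_add_integral (hwInt j c) fun t => hwFTC t j c
      isPrimitive_a := fun j => .of_eq_add_integral (haInt j) fun t => haFTC t j
      balanced := fun j => (hbal j).1
      ae_isFlowVelocity := hODE }
  exact fun i => F.exists_tendsto_preact i (hlive (y i) (hy i))
end

section
/- Let θ = (w_1,...,w_k,a_1,...,a_k) be a Karush–Kuhn–Tucker point of the maximum-margin problem for a two-layer ReLU network on an orthogonally separable dataset in which both classes are nonempty; explicitly, assume: (feasibility) y_i N_θ(x_i) ≥ 1 for all i ∈ [n]; and there exist λ_1,...,λ_n ≥ 0 and numbers ψ'_{i,j} ∈ [0,1] with ψ'_{i,j} = 0 if w_j^T x_i < 0 and ψ'_{i,j} = 1 if w_j^T x_i > 0, such that (equilibrium) w_j = a_j Σ_{i=1}^n λ_i y_i ψ'_{i,j} x_i and a_j = Σ_{i=1}^n λ_i y_i ψ(w_j^T x_i) for all j ∈ [k], and (complementary slackness)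 λ_i = 0 whenever y_i N_θ(x_i) ≠ 1. Then for all j ∈ [k] one has |a_j| = ‖w_j‖, and whenever a_j ≠ 0, w_j/‖w_j‖ = v_{sgn(a_j)} / ( Σ_{j' : sgn(a_{j'}) = sgn(a_j)} a_{j'}² ). -/
open Finset

/-!
Write `u_j = Σ_i λ_i ψ'_{ij} y_i x_i`, so that `w_j = a_j u_j`; the stationarity condition for
`a_j` reads `a_j = ⟪u_j, w_j⟫`, whence `‖w_j‖² = a_j²`. Orthogonal separability makes every term
of `y_i ⟪u_j, x_i⟫` nonnegative, so `⟪w_j, x_i⟫` has the sign of `a_j y_i`: a neuron with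
`a_j ≠ 0` is active exactly on the class `s = sgn a_j`, and `λ_i ψ'_{ij}` vanishes off that class.
Hence `w_j = |a_j| U_s` with `U_s = Σ_{y_i = s} λ_i x_i`, and on class `s` the margin is
`y_i N(x_i) = A_s ⟪U_s, x_i⟫` with `A_s = Σ_{sgn a_j' = s} a_j'²`. So `A_s U_s` is a feasible
nonnegative combination of the constraints of the max-margin problem of class `s`, tight wherever
its weight is nonzero (complementary slackness); such a KKT certificate is the minimum-norm
feasible point, i.e. `A_s U_s = v_s`.
-/

open scoped RealInnerProductSpace

theorem mul_eq_relu_of_subgradient {p t : ℝ} (h0 : t < 0 → p = 0) (h1 : 0 < t → p = 1) :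
    p * t = relu t := by
  rcases lt_trichotomy t 0 with h | rfl | h
  · simp [h0 h, relu, h.le]
  · simp [relu]
  · simp [h1 h, relu, h.le]

theorem Real.mul_sign_eq_abs (a : ℝ) : a * Real.sign a = |a| := by
  rcases lt_trichotomy a 0 with h | rfl | h
  · simp [Real.sign_of_neg h, abs_of_neg h]
  · simp
  · simp [Real.sign_of_pos h, abs_of_pos h]

theorem Real.mul_neg_of_ne_sign {a t : ℝ} (ht : t = 1 ∨ t = -1) (ha : a ≠ 0)
    (h : t ≠ Real.sign a) : a * t < 0 := by
  rcases ha.lt_or_gt with ha | ha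
  · rw [Real.sign_of_neg ha] at h
    obtain rfl : t = 1 := ht.resolve_right h
    linarith
  · rw [Real.sign_of_pos ha] at h
    obtain rfl : t = -1 := ht.resolve_left h
    linarith

section InnerProductSpace

variable {E : Type*} [NormedAddCommGroup E] [InnerProductSpace ℝ E] {ι κ : Type*}

theorem norm_eq_abs_of_eq_smul_of_eq_inner {u w : E} {a : ℝ} (hw : w = a • u)
    (ha : a = ⟪u, w⟫) : ‖w‖ = |a| := by
  have hsq : ‖w‖ ^ 2 = |a| ^ 2 := by
    rw [← real_inner_self_eq_norm_sq, sq_abs, sq]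
    nth_rewrite 1 [hw]
    rw [real_inner_smul_left, ← ha]
  exact (sq_eq_sq₀ (norm_nonneg _) (abs_nonneg _)).1 hsq

theorem eq_of_norm_le_of_complementary_slackness {S : Finset ι} {x : ι → E} {μ : ι → ℝ}
    {ξ v : E} (hξ : ξ = ∑ i ∈ S, μ i • x i) (hμ : ∀ i ∈ S, 0 ≤ μ i)
    (hslack : ∀ i ∈ S, μ i ≠ 0 → ⟪ξ, x i⟫ = 1) (hv : ∀ i ∈ S, 1 ≤ ⟪v, x i⟫)
    (hle : ‖v‖ ≤ ‖ξ‖) : v = ξ := by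
  have inner_ξ (z : E) : ⟪z, ξ⟫ = ∑ i ∈ S, μ i * ⟪z, x i⟫ := by
    simp [hξ, inner_sum, real_inner_smul_right]
  have hξv : ‖ξ‖ ^ 2 ≤ ⟪v, ξ⟫ := by
    rw [← real_inner_self_eq_norm_sq, inner_ξ, inner_ξ]
    refine Finset.sum_le_sum fun i hi => ?_
    rcases eq_or_ne (μ i) 0 with h | h
    · simp [h]
    · rw [hslack i hi h]
      exact mul_le_mul_of_nonneg_left (hv i hi) (hμ i hi)
  have hvξ : ‖v‖ ^ 2 ≤ ‖ξ‖ ^ 2 := pow_le_pow_left₀ (norm_nonneg _) hle 2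
  have hdist : ‖v - ξ‖ ^ 2 ≤ 0 := by rw [norm_sub_sq_real]; linarith
  exact sub_eq_zero.1 (norm_eq_zero.1 (pow_eq_zero_iff two_ne_zero |>.1
    (le_antisymm hdist (sq_nonneg _))))

structure IsOrthSeparable (x : ι → E) (y : ι → ℝ) : Prop where
  label_eq : ∀ i, y i = 1 ∨ y i = -1
  inner_pos : ∀ i i', y i = y i' → 0 < ⟪x i, x i'⟫
  inner_nonpos : ∀ i i', y i ≠ y i' → ⟪x i, x i'⟫ ≤ 0

namespace IsOrthSeparable

variable {x : ι → E} {y : ι → ℝ}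

theorem label_mul_self (hS : IsOrthSeparable x y) (i : ι) : y i * y i = 1 := by
  rcases hS.label_eq i with h | h <;> simp [h]

theorem mul_mul_inner_nonneg (hS : IsOrthSeparable x y) (i i' : ι) :
    0 ≤ y i * y i' * ⟪x i', x i⟫ := by
  by_cases h : y i' = y i
  · rw [h, hS.label_mul_self]
    simpa using (hS.inner_pos i' i h).le
  · have hyy : y i * y i' = -1 := by
      rcases hS.label_eq i with hi | hi <;> rcases hS.label_eq i' with hi' | hi' <;>
        simp_all
    rw [hyy]
    linarith [hS.inner_nonpos i' i h]

variable [Fintype ι]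

theorem mul_inner_sum_nonneg (hS : IsOrthSeparable x y) {c : ι → ℝ} (hc : ∀ i, 0 ≤ c i)
    (i : ι) : 0 ≤ y i * ⟪∑ i', (c i' * y i') • x i', x i⟫ := by
  rw [sum_inner, Finset.mul_sum]
  refine Finset.sum_nonneg fun i' _ => ?_
  rw [real_inner_smul_left]
  nlinarith [hS.mul_mul_inner_nonneg i i', hc i']

theorem mul_inner_sum_pos (hS : IsOrthSeparable x y) {c : ι → ℝ} (hc : ∀ i, 0 ≤ c i)
    {i i₀ : ι} (hi₀ : 0 < c i₀) (hy : y i₀ = y i) :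
    0 < y i * ⟪∑ i', (c i' * y i') • x i', x i⟫ := by
  rw [sum_inner, Finset.mul_sum]
  refine Finset.sum_pos' (fun i' _ => ?_) ⟨i₀, Finset.mem_univ _, ?_⟩
  · rw [real_inner_smul_left]
    nlinarith [hS.mul_mul_inner_nonneg i i', hc i']
  · rw [real_inner_smul_left, hy, show y i * (c i₀ * y i * ⟪x i₀, x i⟫) = c i₀ * ⟪x i₀, x i⟫ by
      linear_combination c i₀ * ⟪x i₀, x i⟫ * hS.label_mul_self i]
    exact mul_pos hi₀ (hS.inner_pos i₀ i hy)

end IsOrthSeparable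


variable [Fintype κ]

noncomputable def twoLayerNet (w : κ → E) (a : κ → ℝ) (z : E) : ℝ := ∑ j, a j * relu ⟪w j, z⟫

noncomputable def classCombination [Fintype ι] (x : ι → E) (y lam : ι → ℝ) (s : ℝ) : E :=
  ∑ i ∈ univ.filter (fun i => y i = s), lam i • x i

/-- KKT conditions of the max-margin problem `min ‖θ‖²/2 s.t. y i * twoLayerNet w a (x i) ≥ 1`,
with multipliers `lam` and a choice `ψ' i j` of ReLU subgradient at `⟪w j, x i⟫`. -/
structure IsKKTPoint [Fintype ι] (x : ι → E) (y : ι → ℝ) (w : κ → E) (a : κ → ℝ)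
    (lam : ι → ℝ) (ψ' : ι → κ → ℝ) : Prop where
  feasible : ∀ i, 1 ≤ y i * twoLayerNet w a (x i)
  lam_nonneg : ∀ i, 0 ≤ lam i
  subgrad_nonneg : ∀ i j, 0 ≤ ψ' i j
  subgrad_of_neg : ∀ i j, ⟪w j, x i⟫ < 0 → ψ' i j = 0
  subgrad_of_pos : ∀ i j, 0 < ⟪w j, x i⟫ → ψ' i j = 1
  eq_smul_sum : ∀ j, w j = a j • ∑ i, (lam i * ψ' i j * y i) • x i
  eq_sum : ∀ j, a j = ∑ i, lam i * y i * relu ⟪w j, x i⟫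
  lam_eq_zero : ∀ i, y i * twoLayerNet w a (x i) ≠ 1 → lam i = 0

namespace IsKKTPoint

variable [Fintype ι] {x : ι → E} {y : ι → ℝ} {w : κ → E} {a : κ → ℝ} {lam : ι → ℝ}
  {ψ' : ι → κ → ℝ}

theorem lam_mul_subgrad_nonneg (hK : IsKKTPoint x y w a lam ψ') (i : ι) (j : κ) :
    0 ≤ lam i * ψ' i j :=
  mul_nonneg (hK.lam_nonneg i) (hK.subgrad_nonneg i j)

theorem norm_eq_abs (hK : IsKKTPoint x y w a lam ψ') (j : κ) : ‖w j‖ = |a j| := by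
  refine norm_eq_abs_of_eq_smul_of_eq_inner (hK.eq_smul_sum j) ?_
  rw [hK.eq_sum j, sum_inner]
  refine Finset.sum_congr rfl fun i _ => ?_
  rw [real_inner_smul_left, real_inner_comm (w j),
    ← mul_eq_relu_of_subgradient (hK.subgrad_of_neg i j) (hK.subgrad_of_pos i j)]
  ring

theorem inner_eq (hK : IsKKTPoint x y w a lam ψ') (hS : IsOrthSeparable x y) (j : κ) (i : ι) :
    ⟪w j, x i⟫ = a j * y i * (y i * ⟪∑ i', (lam i' * ψ' i' j * y i') • x i', x i⟫) := by
  rw [hK.eq_smul_sum j, real_inner_smul_left]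
  linear_combination -(a j * ⟪∑ i', (lam i' * ψ' i' j * y i') • x i', x i⟫) * hS.label_mul_self i

theorem lam_mul_subgrad_eq_zero (hK : IsKKTPoint x y w a lam ψ') (hS : IsOrthSeparable x y)
    {j : κ} {i : ι} (ha : a j ≠ 0) (hi : y i ≠ Real.sign (a j)) : lam i * ψ' i j = 0 := by
  by_contra hne
  have hpos := hS.mul_inner_sum_pos (hK.lam_mul_subgrad_nonneg · j)
    ((hK.lam_mul_subgrad_nonneg i j).lt_of_ne' hne) rfl
  have hneg : ⟪w j, x i⟫ < 0 := by
    rw [hK.inner_eq hS]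
    exact mul_neg_of_neg_of_pos (Real.mul_neg_of_ne_sign (hS.label_eq i) ha hi) hpos
  exact hne (by rw [hK.subgrad_of_neg i j hneg, mul_zero])

theorem exists_active (hK : IsKKTPoint x y w a lam ψ') (hS : IsOrthSeparable x y) {j : κ}
    (ha : a j ≠ 0) : ∃ i₀, 0 < lam i₀ * ψ' i₀ j ∧ y i₀ = Real.sign (a j) := by
  have hw : w j ≠ 0 := by
    rw [← norm_ne_zero_iff, hK.norm_eq_abs]
    exact abs_ne_zero.2 ha
  rw [hK.eq_smul_sum j] at hw
  obtain ⟨i₀, -, hi₀⟩ := Finset.exists_ne_zero_of_sum_ne_zero (right_ne_zero_of_smul hw)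
  have hc : lam i₀ * ψ' i₀ j ≠ 0 := fun h => hi₀ (by rw [h, zero_mul, zero_smul])
  exact ⟨i₀, (hK.lam_mul_subgrad_nonneg i₀ j).lt_of_ne' hc,
    by_contra fun h => hc (hK.lam_mul_subgrad_eq_zero hS ha h)⟩

theorem inner_pos_of_label_eq (hK : IsKKTPoint x y w a lam ψ') (hS : IsOrthSeparable x y)
    {j : κ} {i : ι} (ha : a j ≠ 0) (hi : y i = Real.sign (a j)) : 0 < ⟪w j, x i⟫ := by
  obtain ⟨i₀, hi₀, hy₀⟩ := hK.exists_active hS ha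
  rw [hK.inner_eq hS]
  refine mul_pos ?_ (hS.mul_inner_sum_pos (hK.lam_mul_subgrad_nonneg · j) hi₀ (hy₀.trans hi.symm))
  rw [hi, Real.mul_sign_eq_abs]
  exact abs_pos.2 ha

theorem inner_nonpos_of_label_ne (hK : IsKKTPoint x y w a lam ψ') (hS : IsOrthSeparable x y)
    {j : κ} {i : ι} (ha : a j ≠ 0) (hi : y i ≠ Real.sign (a j)) : ⟪w j, x i⟫ ≤ 0 := by
  rw [hK.inner_eq hS]
  exact mul_nonpos_of_nonpos_of_nonneg (Real.mul_neg_of_ne_sign (hS.label_eq i) ha hi).le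
    (hS.mul_inner_sum_nonneg (hK.lam_mul_subgrad_nonneg · j) i)

theorem eq_abs_smul_classCombination (hK : IsKKTPoint x y w a lam ψ')
    (hS : IsOrthSeparable x y) {j : κ} (ha : a j ≠ 0) :
    w j = |a j| • classCombination x y lam (Real.sign (a j)) := by
  rw [hK.eq_smul_sum j, classCombination, sum_filter, smul_sum, smul_sum]
  refine Finset.sum_congr rfl fun i _ => ?_
  split_ifs with hi
  · rw [hK.subgrad_of_pos i j (hK.inner_pos_of_label_eq hS ha hi), smul_smul, smul_smul,
      ← Real.mul_sign_eq_abs, ← hi]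
    ring_nf
  · rw [hK.lam_mul_subgrad_eq_zero hS ha hi, zero_mul, zero_smul, smul_zero, smul_zero]

theorem label_mul_output_eq (hK : IsKKTPoint x y w a lam ψ') (hS : IsOrthSeparable x y)
    (j : κ) (i : ι) : y i * (a j * relu ⟪w j, x i⟫) =
      if Real.sign (a j) = y i then a j ^ 2 * ⟪classCombination x y lam (y i), x i⟫ else 0 := by
  rcases eq_or_ne (a j) 0 with ha | ha
  · simp [ha]
  split_ifs with hs
  · have hpos := hK.inner_pos_of_label_eq hS ha hs.symm
    have hay : a j * y i = |a j| := by rw [← hs, Real.mul_sign_eq_abs]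
    rw [relu, max_eq_left hpos.le, hK.eq_abs_smul_classCombination hS ha, real_inner_smul_left, hs]
    linear_combination (|a j| * ⟪classCombination x y lam (y i), x i⟫) * hay +
      ⟪classCombination x y lam (y i), x i⟫ * abs_mul_abs_self (a j)
  · rw [relu, max_eq_right (hK.inner_nonpos_of_label_ne hS ha (Ne.symm hs)), mul_zero, mul_zero]

theorem label_mul_net_eq (hK : IsKKTPoint x y w a lam ψ') (hS : IsOrthSeparable x y) (i : ι) :
    y i * twoLayerNet w a (x i) = (∑ j ∈ univ.filter (fun j => Real.sign (a j) = y i), a j ^ 2) *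
      ⟪classCombination x y lam (y i), x i⟫ := by
  rw [twoLayerNet, mul_sum, sum_filter, sum_mul]
  exact Finset.sum_congr rfl fun j _ => by rw [hK.label_mul_output_eq hS, ite_mul, zero_mul]

theorem inv_norm_smul_eq (hK : IsKKTPoint x y w a lam ψ') (hS : IsOrthSeparable x y) {j : κ}
    (ha : a j ≠ 0) {v : E} (hv : ∀ i, y i = Real.sign (a j) → 1 ≤ ⟪v, x i⟫)
    (hvmin : ∀ u : E, (∀ i, y i = Real.sign (a j) → 1 ≤ ⟪u, x i⟫) → ‖v‖ ≤ ‖u‖) :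
    ‖w j‖⁻¹ • w j =
      (∑ j' ∈ univ.filter (fun j'' => Real.sign (a j'') = Real.sign (a j)), a j' ^ 2)⁻¹ • v := by
  set s := Real.sign (a j)
  set A := ∑ j' ∈ univ.filter (fun j'' => Real.sign (a j'') = s), a j' ^ 2
  set C := classCombination x y lam s
  have hA : 0 < A := (pow_pos (abs_pos.2 ha) 2).trans_le <| by
    rw [sq_abs]
    exact single_le_sum (fun j' _ => sq_nonneg (a j')) (mem_filter.2 ⟨mem_univ j, rfl⟩)
  have hmargin (i : ι) (hi : y i = s) : ⟪A • C, x i⟫ = y i * twoLayerNet w a (x i) := by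
    rw [hK.label_mul_net_eq hS, real_inner_smul_left, hi]
  have hv_eq : v = A • C := by
    refine eq_of_norm_le_of_complementary_slackness (S := univ.filter (fun i => y i = s))
      (μ := fun i => A * lam i) (by simp only [C, classCombination, smul_sum, smul_smul])
      (fun i _ => mul_nonneg hA.le (hK.lam_nonneg i)) (fun i hi hμ => ?_)
      (fun i hi => hv i (mem_filter.1 hi).2)
      (hvmin _ fun i hi => (hmargin i hi).symm ▸ hK.feasible i)
    rw [hmargin i (mem_filter.1 hi).2]
    by_contra h
    exact hμ (by rw [hK.lam_eq_zero i h, mul_zero])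
  rw [hv_eq, smul_smul, inv_mul_cancel₀ hA.ne', one_smul, hK.norm_eq_abs,
    hK.eq_abs_smul_classCombination hS ha, smul_smul, inv_mul_cancel₀ (abs_pos.2 ha).ne', one_smul]

end IsKKTPoint

end InnerProductSpace

theorem dotp_eq_inner {m : ℕ} (u v : Fin m → ℝ) :
    dotp u v = ⟪WithLp.toLp 2 u, (WithLp.toLp 2 v : EuclideanSpace ℝ (Fin m))⟫ := by
  simp [dotp, PiLp.inner_apply, mul_comm]

theorem norm2_eq_norm {m : ℕ} (u : Fin m → ℝ) :
    norm2 u = ‖(WithLp.toLp 2 u : EuclideanSpace ℝ (Fin m))‖ := by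
  simp [norm2, EuclideanSpace.norm_eq]

theorem net_eq_twoLayerNet {d k : ℕ} (w : Fin k → Fin d → ℝ) (a : Fin k → ℝ) (z : Fin d → ℝ) :
    net w a z = twoLayerNet (fun j => (WithLp.toLp 2 (w j) : EuclideanSpace ℝ (Fin d))) a
      (WithLp.toLp 2 z) := by
  simp [net, twoLayerNet, dotp_eq_inner]

theorem kkt_point_structure_general
    (d n k : ℕ) (x : Fin n → Fin d → ℝ) (y : Fin n → ℝ)
    (hy : ∀ i, y i = 1 ∨ y i = -1)
    (hsep1 : ∀ i i', y i = y i' → 0 < dotp (x i) (x i'))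
    (hsep2 : ∀ i i', y i ≠ y i' → dotp (x i) (x i') ≤ 0)
    (v : ℝ → Fin d → ℝ)
    (hvfeas : ∀ s : ℝ, s = 1 ∨ s = -1 → ∀ i, y i = s → 1 ≤ dotp (v s) (x i))
    (hvmin : ∀ s : ℝ, s = 1 ∨ s = -1 → ∀ u : Fin d → ℝ,
      (∀ i, y i = s → 1 ≤ dotp u (x i)) → norm2 (v s) ≤ norm2 u)
    (w : Fin k → Fin d → ℝ) (a : Fin k → ℝ)
    (hfeas : ∀ i, 1 ≤ y i * net w a (x i))
    (lam : Fin n → ℝ) (hlam : ∀ i, 0 ≤ lam i)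
    (ψ' : Fin n → Fin k → ℝ)
    (hψ01 : ∀ i j, 0 ≤ ψ' i j ∧ ψ' i j ≤ 1)
    (hψ0 : ∀ i j, dotp (w j) (x i) < 0 → ψ' i j = 0)
    (hψ1 : ∀ i j, 0 < dotp (w j) (x i) → ψ' i j = 1)
    (heqw : ∀ j ic, w j ic = a j * ∑ i, lam i * y i * ψ' i j * x i ic)
    (heqa : ∀ j, a j = ∑ i, lam i * y i * relu (dotp (w j) (x i)))
    (hcs : ∀ i, y i * net w a (x i) ≠ 1 → lam i = 0) :
    ∀ j, |a j| = norm2 (w j) ∧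
      (a j ≠ 0 → ∀ ic, w j ic / norm2 (w j) =
        v (Real.sign (a j)) ic /
          (∑ j' ∈ Finset.univ.filter (fun j'' => Real.sign (a j'') = Real.sign (a j)),
            (a j') ^ 2)) := by
  let X : Fin n → EuclideanSpace ℝ (Fin d) := fun i => WithLp.toLp 2 (x i)
  let W : Fin k → EuclideanSpace ℝ (Fin d) := fun j => WithLp.toLp 2 (w j)
  have hS : IsOrthSeparable X y :=
    ⟨hy, fun i i' h => by simpa [dotp_eq_inner] using hsep1 i i' h,
      fun i i' h => by simpa [dotp_eq_inner] using hsep2 i i' h⟩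
  have hK : IsKKTPoint X y W a lam ψ' :=
    { feasible := by simpa [net_eq_twoLayerNet] using hfeas
      lam_nonneg := hlam
      subgrad_nonneg := fun i j => (hψ01 i j).1
      subgrad_of_neg := by simpa [dotp_eq_inner] using hψ0
      subgrad_of_pos := by simpa [dotp_eq_inner] using hψ1
      eq_smul_sum := fun j => by
        ext ic
        simp [W, X, heqw, Finset.mul_sum, mul_comm, mul_left_comm]
      eq_sum := by simpa [dotp_eq_inner] using heqa
      lam_eq_zero := by simpa [net_eq_twoLayerNet] using hcs }
  intro j
  refine ⟨by rw [norm2_eq_norm, hK.norm_eq_abs], fun ha ic => ?_⟩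
  have hs := (Real.sign_apply_eq_of_ne_zero _ ha).symm
  have hV : ∀ i, y i = Real.sign (a j) → 1 ≤ ⟪WithLp.toLp 2 (v (Real.sign (a j))), X i⟫ := by
    simpa [dotp_eq_inner] using hvfeas _ hs
  have hVmin : ∀ u : EuclideanSpace ℝ (Fin d), (∀ i, y i = Real.sign (a j) → 1 ≤ ⟪u, X i⟫) →
      ‖WithLp.toLp 2 (v (Real.sign (a j)))‖ ≤ ‖u‖ := fun u hu => by
    simpa [norm2_eq_norm] using hvmin _ hs u.ofLp fun i hi => by simpa [dotp_eq_inner] using hu i hi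
  have hdir := hK.inv_norm_smul_eq hS ha hV hVmin
  simpa [div_eq_inv_mul, norm2_eq_norm] using congrArg (· ic) hdir

/-- Any Karush–Kuhn–Tucker point `θ = (w, a)` of the maximum-margin problem for a
two-layer ReLU network on an orthogonally separable dataset with both classes nonempty satisfies
`|a_j| = ‖w_j‖` for all `j`, and whenever `a_j ≠ 0`,
`w_j / ‖w_j‖ = v_{sgn(a_j)} / (Σ_{j' : sgn(a_{j'}) = sgn(a_j)} a_{j'}²)`,
where `v_s` is the maximum-margin vector of class `s`. -/
theorem kkt_point_structure
    (d n k : ℕ) (x : Fin n → Fin d → ℝ) (y : Fin n → ℝ)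
    (hy : ∀ i, y i = 1 ∨ y i = -1)
    (hsep1 : ∀ i i', y i = y i' → 0 < dotp (x i) (x i'))
    (hsep2 : ∀ i i', y i ≠ y i' → dotp (x i) (x i') ≤ 0)
    (hpos : ∃ i, y i = 1) (hneg : ∃ i, y i = -1)
    (v : ℝ → Fin d → ℝ)
    (hvfeas : ∀ s : ℝ, s = 1 ∨ s = -1 → ∀ i, y i = s → 1 ≤ dotp (v s) (x i))
    (hvmin : ∀ s : ℝ, s = 1 ∨ s = -1 → ∀ u : Fin d → ℝ,
      (∀ i, y i = s → 1 ≤ dotp u (x i)) → norm2 (v s) ≤ norm2 u)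
    (w : Fin k → Fin d → ℝ) (a : Fin k → ℝ)
    (hfeas : ∀ i, 1 ≤ y i * net w a (x i))
    (lam : Fin n → ℝ) (hlam : ∀ i, 0 ≤ lam i)
    (ψ' : Fin n → Fin k → ℝ)
    (hψ01 : ∀ i j, 0 ≤ ψ' i j ∧ ψ' i j ≤ 1)
    (hψ0 : ∀ i j, dotp (w j) (x i) < 0 → ψ' i j = 0)
    (hψ1 : ∀ i j, 0 < dotp (w j) (x i) → ψ' i j = 1)
    (heqw : ∀ j ic, w j ic = a j * ∑ i, lam i * y i * ψ' i j * x i ic)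
    (heqa : ∀ j, a j = ∑ i, lam i * y i * relu (dotp (w j) (x i)))
    (hcs : ∀ i, y i * net w a (x i) ≠ 1 → lam i = 0) :
    ∀ j, |a j| = norm2 (w j) ∧
      (a j ≠ 0 → ∀ ic, w j ic / norm2 (w j) =
        v (Real.sign (a j)) ic /
          (∑ j' ∈ Finset.univ.filter (fun j'' => Real.sign (a j'') = Real.sign (a j)),
            (a j') ^ 2)) :=
  kkt_point_structure_general d n k x y hy hsep1 hsep2 v hvfeas hvmin w a hfeas lam hlam ψ' hψ01 hψ0
    hψ1 heqw heqa hcs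
end

section
/- Let v_1, v_{-1} ∈ ℝ^d with v_1 ≠ v_{-1}, and consider the network N(z) = ψ(v_1^T z) − ψ(v_{-1}^T z), where ψ(u) = max{u,0}. Let m ∈ {±1}, let D be a (φ, ρ, τ)-Bernoulli distribution with m·cos ∠(v_1 − v_{-1}, φ) < 0, and let p ∈ ℝ^d be arbitrary. Then P_{(x,y)∼D}{ m·y·N(p + x) > 0 } ≤ 1/2 + (1/2)·exp( −2dτ²·cos² ∠(v_1 − v_{-1}, φ) ). -/
open MeasureTheory Finset

/-- The `(φ, ρ, τ)`-Bernoulli distribution on `ρHᵈ × {±1}`: draw `y` uniformly from `{±1}`, then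
sample `x` by taking `yρφ` and flipping the sign of each coordinate independently with
probability `1/2 − τ`. -/
noncomputable def bernoulliModel (d : ℕ) (φ : Fin d → ℝ) (ρ τ : ℝ) :
    Measure ((Fin d → ℝ) × ℝ) :=
  ∑ yb : Bool, ∑ s : Fin d → Bool,
    (ENNReal.ofReal ((1 / 2) * ∏ i, (if s i then 1 / 2 - τ else 1 / 2 + τ))) •
      Measure.dirac
        ((fun i => (if s i then (-1 : ℝ) else 1) * (if yb then (1 : ℝ) else -1) * ρ * φ i),
          (if yb then (1 : ℝ) else -1))

open Real ProbabilityTheory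

/-!
A positive output `m y N(p + x) > 0` forces `m y (v₁ - v₋₁)ᵀ(p + x) > 0`, because the ReLU is
monotone. Writing the sample as `x = y ρ (ε ⊙ φ)` with independent signs `εᵢ` of mean `2τ`, this
reads `y K + ρ T > 0` with `K = m (v₁ - v₋₁)ᵀp`, `T = ∑ εᵢ aᵢ` and `aᵢ = m (v₁ - v₋₁)ᵢ φᵢ`.
For a fixed sign pattern both labels `y = ±1` can satisfy this only if `T > 0`, so the
probability is at most `1/2 + P(T > 0)/2`. Since `𝔼 T = 2τ ∑ aᵢ < 0`, Hoeffding's lemma and a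
Chernoff bound give `P(T > 0) ≤ exp(-2τ² (∑ aᵢ)² / ∑ aᵢ²)`, and on the hypercube
`(∑ aᵢ)² / ∑ aᵢ² = d cos² ∠(v₁ - v₋₁, φ)`.
-/

lemma biased_sign_mgf_le {τ : ℝ} (hτ : |τ| ≤ 1 / 2) (t : ℝ) :
    (1 / 2 - τ) * exp (-t) + (1 / 2 + τ) * exp t ≤ exp (2 * τ * t + t ^ 2 / 2) := by
  obtain ⟨hlo, hhi⟩ := abs_le.mp hτ
  set μ : Measure ℝ :=
    ENNReal.ofReal (1 / 2 - τ) • Measure.dirac (-1) + ENNReal.ofReal (1 / 2 + τ) • Measure.dirac 1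
  have hint (f : ℝ → ℝ) : ∫ x, f x ∂μ = (1 / 2 - τ) * f (-1) + (1 / 2 + τ) * f 1 := by
    rw [integral_add_measure, integral_smul_measure, integral_smul_measure, integral_dirac,
      integral_dirac, ENNReal.toReal_ofReal (by linarith), ENNReal.toReal_ofReal (by linarith),
      smul_eq_mul, smul_eq_mul]
    all_goals exact (integrable_dirac enorm_lt_top).smul_measure ENNReal.ofReal_ne_top
  have : IsProbabilityMeasure μ := ⟨by
    simp only [μ, Measure.add_apply, Measure.smul_apply, measure_univ, smul_eq_mul, mul_one]
    rw [← ENNReal.ofReal_add (by linarith) (by linarith)]; norm_num⟩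
  have hIcc : ∀ᵐ x ∂μ, x ∈ Set.Icc (-1 : ℝ) 1 := by
    refine ae_add_measure_iff.mpr ⟨Measure.ae_smul_measure ?_ _, Measure.ae_smul_measure ?_ _⟩ <;>
      exact (ae_dirac_iff measurableSet_Icc).mpr (by norm_num)
  have hmean : ∫ x, x ∂μ = 2 * τ := by rw [hint]; ring
  have hsub := (hasSubgaussianMGF_of_mem_Icc aemeasurable_id hIcc).mgf_le t
  rw [mgf] at hsub
  simp only [id] at hsub
  rw [hmean, hint] at hsub
  calc (1 / 2 - τ) * exp (-t) + (1 / 2 + τ) * exp t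
      = ((1 / 2 - τ) * exp (t * (-1 - 2 * τ)) + (1 / 2 + τ) * exp (t * (1 - 2 * τ)))
          * exp (2 * τ * t) := by
        simp only [add_mul, mul_assoc, ← exp_add]; ring_nf
    _ ≤ exp (((‖(1 : ℝ) - -1‖₊ / 2) ^ 2 : NNReal) * t ^ 2 / 2) * exp (2 * τ * t) := by gcongr
    _ = exp (2 * τ * t + t ^ 2 / 2) := by
        rw [← exp_add]; norm_num; ring_nf

def flipSign (b : Bool) : ℝ := if b then -1 else 1

noncomputable def flipWeight (τ : ℝ) (b : Bool) : ℝ := if b then 1 / 2 - τ else 1 / 2 + τ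

lemma flipWeight_nonneg {τ : ℝ} (hτ : |τ| ≤ 1 / 2) (b : Bool) : 0 ≤ flipWeight τ b := by
  obtain ⟨hlo, hhi⟩ := abs_le.mp hτ
  unfold flipWeight
  split_ifs <;> linarith

section FlipPatterns

variable {ι : Type*} [Fintype ι] {τ : ℝ}

noncomputable def flipProb (τ : ℝ) (s : ι → Bool) : ℝ := ∏ i, flipWeight τ (s i)

lemma flipProb_nonneg (hτ : |τ| ≤ 1 / 2) (s : ι → Bool) : 0 ≤ flipProb τ s :=
  prod_nonneg fun i _ ↦ flipWeight_nonneg hτ (s i)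

variable [DecidableEq ι]

lemma sum_flipProb (τ : ℝ) : ∑ s : ι → Bool, flipProb τ s = 1 := by
  calc ∑ s : ι → Bool, flipProb τ s = ∏ _i : ι, ∑ b : Bool, flipWeight τ b := by
        rw [prod_univ_sum, Fintype.piFinset_univ]; rfl
    _ = 1 := by norm_num [flipWeight]

lemma sum_flipProb_mul_exp_le (hτ : |τ| ≤ 1 / 2) (a : ι → ℝ) :
    ∑ s : ι → Bool, flipProb τ s * exp (∑ i, flipSign (s i) * a i) ≤
      exp (2 * τ * ∑ i, a i + (∑ i, a i ^ 2) / 2) := by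
  calc ∑ s : ι → Bool, flipProb τ s * exp (∑ i, flipSign (s i) * a i)
      = ∏ i, ∑ b : Bool, flipWeight τ b * exp (flipSign b * a i) := by
        rw [prod_univ_sum, Fintype.piFinset_univ]
        simp only [flipProb, exp_sum, prod_mul_distrib]
    _ ≤ ∏ i, exp (2 * τ * a i + a i ^ 2 / 2) := by
        refine prod_le_prod (fun i _ ↦ sum_nonneg fun b _ ↦ ?_) (fun i _ ↦ ?_)
        · exact mul_nonneg (flipWeight_nonneg hτ b) (exp_pos _).le
        · simpa [Fintype.sum_bool, flipWeight, flipSign, add_comm] using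
            biased_sign_mgf_le hτ (a i)
    _ = exp (2 * τ * ∑ i, a i + (∑ i, a i ^ 2) / 2) := by
        rw [← exp_sum, sum_add_distrib, mul_sum, sum_div]

lemma sum_flipProb_pos_le (hτ₀ : 0 ≤ τ) (hτ₁ : τ ≤ 1 / 2) {a : ι → ℝ} (ha : ∑ i, a i < 0) :
    ∑ s : ι → Bool, flipProb τ s * (if 0 < ∑ i, flipSign (s i) * a i then 1 else 0) ≤
      exp (-2 * τ ^ 2 * (∑ i, a i) ^ 2 / ∑ i, a i ^ 2) := by
  have hτ : |τ| ≤ 1 / 2 := abs_le.mpr ⟨by linarith, hτ₁⟩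
  set M := ∑ i, a i
  set V := ∑ i, a i ^ 2
  have hV : 0 < V := by
    obtain ⟨i, -, hi⟩ := exists_ne_zero_of_sum_ne_zero ha.ne
    exact (sq_pos_of_ne_zero hi).trans_le (single_le_sum (fun j _ ↦ sq_nonneg (a j)) (mem_univ i))
  -- the Chernoff parameter minimising `2τtM + t²V/2`
  set t := -2 * τ * M / V
  have ht : 0 ≤ t := div_nonneg (by nlinarith) hV.le
  calc ∑ s : ι → Bool, flipProb τ s * (if 0 < ∑ i, flipSign (s i) * a i then 1 else 0)
      ≤ ∑ s : ι → Bool, flipProb τ s * exp (∑ i, flipSign (s i) * (t * a i)) := by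
        refine sum_le_sum fun s _ ↦ mul_le_mul_of_nonneg_left ?_ (flipProb_nonneg hτ s)
        simp only [mul_left_comm _ t, ← mul_sum]
        split_ifs with h
        · exact one_le_exp (mul_nonneg ht h.le)
        · exact (exp_pos _).le
    _ ≤ exp (2 * τ * ∑ i, t * a i + (∑ i, (t * a i) ^ 2) / 2) := sum_flipProb_mul_exp_le hτ _
    _ = exp (-2 * τ ^ 2 * M ^ 2 / V) := by
        rw [← mul_sum, sum_congr rfl fun i _ ↦ mul_pow t (a i) 2, ← mul_sum]
        congr 1
        simp only [t]
        field_simp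
        ring

end FlipPatterns

lemma sum_label_ite_le {K ρ T : ℝ} (hρ : 0 ≤ ρ) :
    ∑ y ∈ ({1, -1} : Finset ℝ), (if 0 < y * K + ρ * T then 1 else 0) ≤
      1 + if 0 < T then (1 : ℝ) else 0 := by
  rw [sum_pair (by norm_num), one_mul, neg_one_mul]
  by_cases hT : 0 < T
  · split_ifs <;> linarith
  · have : ρ * T ≤ 0 := mul_nonpos_of_nonneg_of_nonpos hρ (not_lt.mp hT)
    split_ifs <;> linarith

lemma sum_flipProb_label_le {ι : Type*} [Fintype ι] [DecidableEq ι] {τ ρ : ℝ} (hτ₀ : 0 ≤ τ)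
    (hτ₁ : τ ≤ 1 / 2) (hρ : 0 ≤ ρ) (K : ℝ) {a : ι → ℝ} (ha : ∑ i, a i < 0) :
    ∑ s : ι → Bool, 1 / 2 * flipProb τ s * ∑ y ∈ ({1, -1} : Finset ℝ),
        (if 0 < y * K + ρ * ∑ i, flipSign (s i) * a i then 1 else 0) ≤
      1 / 2 + 1 / 2 * exp (-2 * τ ^ 2 * (∑ i, a i) ^ 2 / ∑ i, a i ^ 2) := by
  have hτ : |τ| ≤ 1 / 2 := abs_le.mpr ⟨by linarith, hτ₁⟩
  calc _ ≤ ∑ s : ι → Bool, (1 / 2 * flipProb τ s + 1 / 2 *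
          (flipProb τ s * if 0 < ∑ i, flipSign (s i) * a i then 1 else 0)) := by
        refine sum_le_sum fun s _ ↦ ?_
        calc _ ≤ 1 / 2 * flipProb τ s * (1 + if 0 < ∑ i, flipSign (s i) * a i then 1 else 0) :=
              mul_le_mul_of_nonneg_left (sum_label_ite_le hρ)
                (mul_nonneg one_half_pos.le (flipProb_nonneg hτ s))
          _ = _ := by ring
    _ = 1 / 2 + 1 / 2 * ∑ s : ι → Bool,
          flipProb τ s * (if 0 < ∑ i, flipSign (s i) * a i then 1 else 0) := by
        rw [sum_add_distrib, ← mul_sum, ← mul_sum, sum_flipProb, mul_one]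
    _ ≤ _ := by grw [sum_flipProb_pos_le hτ₀ hτ₁ ha]

lemma bernoulliModel_apply {d : ℕ} (φ : Fin d → ℝ) (ρ : ℝ) {τ : ℝ} (hτ : |τ| ≤ 1 / 2)
    {E : Set ((Fin d → ℝ) × ℝ)} (hE : MeasurableSet E) :
    bernoulliModel d φ ρ τ E = ENNReal.ofReal (∑ s : Fin d → Bool, 1 / 2 * flipProb τ s *
      ∑ y ∈ ({1, -1} : Finset ℝ), E.indicator 1 (fun i ↦ flipSign (s i) * y * ρ * φ i, y)) := by
  have hind (x) : ENNReal.ofReal (E.indicator 1 x) = E.indicator 1 x := by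
    by_cases hx : x ∈ E <;> simp [hx]
  have hind₀ (x) : 0 ≤ E.indicator (1 : (Fin d → ℝ) × ℝ → ℝ) x :=
    Set.indicator_nonneg (fun _ _ ↦ zero_le_one) x
  have hw (s : Fin d → Bool) : 0 ≤ 1 / 2 * flipProb τ s :=
    mul_nonneg one_half_pos.le (flipProb_nonneg hτ s)
  rw [ENNReal.ofReal_sum_of_nonneg fun s _ ↦ mul_nonneg (hw s) (sum_nonneg fun y _ ↦ hind₀ _)]
  simp only [bernoulliModel, Measure.coe_finsetSum, Finset.sum_apply, Measure.smul_apply,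
    Measure.dirac_apply' _ hE, smul_eq_mul]
  rw [sum_comm]
  refine sum_congr rfl fun s _ ↦ ?_
  rw [Fintype.sum_bool, sum_pair (by norm_num), ENNReal.ofReal_mul (hw s),
    ENNReal.ofReal_add (hind₀ _) (hind₀ _), hind, hind, mul_add]
  rfl

lemma mul_sub_pos_of_mul_relu_sub_relu_pos {c a b : ℝ} (h : 0 < c * (relu a - relu b)) :
    0 < c * (a - b) := by
  have hmono : Monotone relu := fun x y hxy ↦ max_le_max hxy le_rfl
  rcases pos_and_pos_or_neg_and_neg_of_mul_pos h with ⟨hc, hr⟩ | ⟨hc, hr⟩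
  · exact mul_pos hc (sub_pos.mpr (hmono.reflect_lt (sub_pos.mp hr)))
  · exact mul_pos_of_neg_of_neg hc (sub_neg.mpr (hmono.reflect_lt (sub_neg.mp hr)))

section Network

variable {d : ℕ} (v1 vm1 p φ : Fin d → ℝ) (s : Fin d → Bool) {m y ρ : ℝ}

lemma margin_at_sample_eq (hy : y * y = 1) :
    m * y * (dotp v1 (fun i ↦ p i + flipSign (s i) * y * ρ * φ i) -
        dotp vm1 (fun i ↦ p i + flipSign (s i) * y * ρ * φ i)) =
      y * (m * dotp (fun i ↦ v1 i - vm1 i) p) +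
        ρ * ∑ i, flipSign (s i) * (m * (v1 i - vm1 i) * φ i) := by
  simp only [dotp, mul_sum, ← sum_sub_distrib, ← sum_add_distrib]
  refine sum_congr rfl fun i _ ↦ ?_
  linear_combination (m * (v1 i - vm1 i) * ρ * flipSign (s i) * φ i) * hy

lemma indicator_network_pos_le (hy : y * y = 1) :
    {xy : (Fin d → ℝ) × ℝ | 0 < m * xy.2 * (relu (dotp v1 (fun i ↦ p i + xy.1 i)) -
        relu (dotp vm1 (fun i ↦ p i + xy.1 i)))}.indicator (1 : (Fin d → ℝ) × ℝ → ℝ)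
        (fun i ↦ flipSign (s i) * y * ρ * φ i, y) ≤
      if 0 < y * (m * dotp (fun i ↦ v1 i - vm1 i) p) +
          ρ * ∑ i, flipSign (s i) * (m * (v1 i - vm1 i) * φ i) then 1 else 0 := by
  rw [Set.indicator_apply]
  split_ifs with hx hpos hpos
  · exact le_rfl
  · exact absurd
      (margin_at_sample_eq v1 vm1 p φ s hy ▸ mul_sub_pos_of_mul_relu_sub_relu_pos hx) hpos
  · exact zero_le_one
  · exact le_rfl

end Network

lemma sum_mul_mul_eq_mul_dotp {d : ℕ} (m : ℝ) (w φ : Fin d → ℝ) :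
    ∑ i, m * w i * φ i = m * dotp w φ := by
  rw [dotp, mul_sum]
  exact sum_congr rfl fun i _ ↦ mul_assoc _ _ _

lemma sq_sum_div_sum_sq_eq {d : ℕ} {m : ℝ} (hm : m ^ 2 = 1) {φ : Fin d → ℝ}
    (hφ : ∀ i, φ i = 1 / Real.sqrt d ∨ φ i = -(1 / Real.sqrt d)) (w : Fin d → ℝ) :
    (∑ i, m * w i * φ i) ^ 2 / ∑ i, (m * w i * φ i) ^ 2 =
      d * (dotp w φ / (norm2 w * norm2 φ)) ^ 2 := by
  have hφsq (i : Fin d) : φ i ^ 2 = 1 / d := by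
    rcases hφ i with h | h <;> simp [h, Real.sq_sqrt]
  have hsq : ∑ i, (m * w i * φ i) ^ 2 = norm2 w ^ 2 / d := by
    rw [norm2, Real.sq_sqrt (sum_nonneg fun i _ ↦ sq_nonneg _), sum_div]
    refine sum_congr rfl fun i _ ↦ ?_
    rw [mul_pow, mul_pow, hm, hφsq]
    ring
  rcases Nat.eq_zero_or_pos d with rfl | hd
  · simp [dotp]
  have hφ1 : norm2 φ = 1 := by
    rw [norm2, sum_congr rfl fun i _ ↦ hφsq i]
    simp [hd.ne']
  rw [sum_mul_mul_eq_mul_dotp, hsq, hφ1, mul_one, div_div_eq_mul_div, mul_pow, hm, div_pow]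
  ring

theorem reprogramming_fails_general
    (d : ℕ) (v1 vm1 : Fin d → ℝ)
    (m : ℝ) (hm : m = 1 ∨ m = -1)
    (φ : Fin d → ℝ) (hφ : ∀ i, φ i = 1 / Real.sqrt d ∨ φ i = -(1 / Real.sqrt d))
    (ρ τ : ℝ) (hρ : 0 < ρ) (hτ : 0 < τ) (hτ' : τ ≤ 1 / 2)
    (hang : m * (dotp (fun i => v1 i - vm1 i) φ /
        (norm2 (fun i => v1 i - vm1 i) * norm2 φ)) < 0)
    (p : Fin d → ℝ) :
    bernoulliModel d φ ρ τ
        {xy | 0 < m * xy.2 * (relu (dotp v1 (fun i => p i + xy.1 i))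
            - relu (dotp vm1 (fun i => p i + xy.1 i)))} ≤
      ENNReal.ofReal (1 / 2 + (1 / 2) * Real.exp (-2 * d * τ ^ 2 *
        (dotp (fun i => v1 i - vm1 i) φ /
          (norm2 (fun i => v1 i - vm1 i) * norm2 φ)) ^ 2)) := by
  set w : Fin d → ℝ := fun i ↦ v1 i - vm1 i
  have hτ₁ : |τ| ≤ 1 / 2 := abs_le.mpr ⟨by linarith, hτ'⟩
  have hm2 : m ^ 2 = 1 := by rcases hm with rfl | rfl <;> norm_num
  have ha : ∑ i, m * w i * φ i < 0 := by
    have hN : 0 ≤ norm2 w * norm2 φ := mul_nonneg (Real.sqrt_nonneg _) (Real.sqrt_nonneg _)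
    rw [← mul_div_assoc] at hang
    rw [sum_mul_mul_eq_mul_dotp]
    exact ((div_neg_iff.mp hang).resolve_left fun h ↦ hN.not_gt h.2).1
  have hE : MeasurableSet {xy : (Fin d → ℝ) × ℝ | 0 < m * xy.2 *
      (relu (dotp v1 (fun i => p i + xy.1 i)) - relu (dotp vm1 (fun i => p i + xy.1 i)))} :=
    measurableSet_lt measurable_const (by unfold relu dotp; fun_prop)
  rw [bernoulliModel_apply φ ρ hτ₁ hE]
  refine ENNReal.ofReal_le_ofReal ?_
  calc _ ≤ ∑ s : Fin d → Bool, 1 / 2 * flipProb τ s * ∑ y ∈ ({1, -1} : Finset ℝ),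
        (if 0 < y * (m * dotp w p) + ρ * ∑ i, flipSign (s i) * (m * w i * φ i) then 1 else 0) := by
        refine sum_le_sum fun s _ ↦ mul_le_mul_of_nonneg_left (sum_le_sum fun y hy ↦ ?_)
          (mul_nonneg one_half_pos.le (flipProb_nonneg hτ₁ s))
        obtain rfl | rfl : y = 1 ∨ y = -1 := by simpa using hy
        all_goals exact indicator_network_pos_le v1 vm1 p φ s (by norm_num)
    _ ≤ 1 / 2 + 1 / 2 * exp (-2 * τ ^ 2 * (∑ i, m * w i * φ i) ^ 2 / ∑ i, (m * w i * φ i) ^ 2) :=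
        sum_flipProb_label_le hτ.le hτ' hρ.le _ ha
    _ = _ := by rw [mul_div_assoc, sq_sum_div_sum_sq_eq hm2 hφ]; ring_nf

/-- Let `v₁ ≠ v₋₁` and `N(z) = ψ(v₁ᵀz) − ψ(v₋₁ᵀz)`.  Let `m ∈ {±1}`, let `D` be a
`(φ, ρ, τ)`-Bernoulli distribution with `m · cos ∠(v₁ − v₋₁, φ) < 0`, and let `p` be arbitrary.
Then `P_{(x,y)∼D}{m y N(p + x) > 0} ≤ 1/2 + (1/2) exp(−2dτ² cos² ∠(v₁ − v₋₁, φ))`. -/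
theorem reprogramming_fails
    (d : ℕ) (v1 vm1 : Fin d → ℝ) (hv : v1 ≠ vm1)
    (m : ℝ) (hm : m = 1 ∨ m = -1)
    (φ : Fin d → ℝ) (hφ : ∀ i, φ i = 1 / Real.sqrt d ∨ φ i = -(1 / Real.sqrt d))
    (ρ τ : ℝ) (hρ : 0 < ρ) (hτ : 0 < τ) (hτ' : τ ≤ 1 / 2)
    (hang : m * (dotp (fun i => v1 i - vm1 i) φ /
        (norm2 (fun i => v1 i - vm1 i) * norm2 φ)) < 0)
    (p : Fin d → ℝ) :
    bernoulliModel d φ ρ τ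
        {xy | 0 < m * xy.2 * (relu (dotp v1 (fun i => p i + xy.1 i))
            - relu (dotp vm1 (fun i => p i + xy.1 i)))} ≤
      ENNReal.ofReal (1 / 2 + (1 / 2) * Real.exp (-2 * d * τ ^ 2 *
        (dotp (fun i => v1 i - vm1 i) φ /
          (norm2 (fun i => v1 i - vm1 i) * norm2 φ)) ^ 2)) :=
  reprogramming_fails_general d v1 vm1 m hm φ hφ ρ τ hρ hτ hτ' hang p
end

section
/- Let g be a real centred Gaussian random variable with variance σ² > 0, let U > 0, and let f(u) = e^{−u²/2}/√(2π) denote the standard Gaussian density. Then E[max{g − U, 0}] = σ·f(U/σ) − U·P{g ≥ U}, and consequently E[max{g − U, 0}] ≤ σ·f(U/σ)·min{1, (σ/U)²}. -/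
open MeasureTheory ProbabilityTheory Filter Set Topology NNReal

/-! Write `φ` for the centred Gaussian density of variance `v`. Since `φ' x = -(x / v) φ x`,
the tail first moment is `∫_a^∞ x φ = v φ(a)`, and splitting `(x - a)⁺ = x - a` on `(a, ∞)`
gives the identity `E (g - a)⁺ = v φ(a) - a P(g ≥ a)`. For the bound, `P(g ≥ a) ≥ 0` gives
the factor `1`, and the Gaussian tail estimate `P(g ≥ a) ≥ (v / a - v² / a³) φ(a)` gives the
factor `v / a²`. -/

lemma hasDerivAt_gaussianPDFReal (μ : ℝ) (v : ℝ≥0) (x : ℝ) :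
    HasDerivAt (gaussianPDFReal μ v) (-((x - μ) / v) * gaussianPDFReal μ v x) x := by
  have h := ((((hasDerivAt_id' x).sub_const μ).pow 2).neg.div_const (2 * (v : ℝ))).exp.const_mul
    (√(2 * Real.pi * v))⁻¹
  refine h.congr_deriv ?_
  rw [gaussianPDFReal]
  by_cases hv : (v : ℝ) = 0
  · simp [hv]
  · simp only [Pi.pow_apply, Pi.neg_apply]
    field_simp
    ring

lemma tendsto_gaussianPDFReal_atTop (μ : ℝ) (v : ℝ≥0) :
    Tendsto (gaussianPDFReal μ v) atTop (𝓝 0) := by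
  rcases eq_or_ne v 0 with rfl | hv
  · rw [gaussianPDFReal_zero_var]
    exact tendsto_const_nhds
  have hexp : Tendsto (fun x => -(x - μ) ^ 2 / (2 * (v : ℝ))) atTop atBot := by
    have := ((tendsto_pow_atTop two_ne_zero).comp (tendsto_atTop_add_const_right _ (-μ)
      tendsto_id)).atTop_div_const (by positivity : 0 < 2 * (v : ℝ))
    simpa [neg_div, sub_eq_add_neg] using this
  have := (Real.tendsto_exp_atBot.comp hexp).const_mul (√(2 * Real.pi * v))⁻¹
  rwa [mul_zero] at this

lemma integrable_mul_gaussianPDFReal (v : ℝ≥0) :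
    Integrable fun x => x * gaussianPDFReal 0 v x := by
  rcases eq_or_ne v 0 with rfl | hv
  · simp
  have hb : 0 < (2 * (v : ℝ))⁻¹ := by positivity
  convert (integrable_mul_exp_neg_mul_sq hb).const_mul (√(2 * Real.pi * v))⁻¹ using 2 with x
  simp only [gaussianPDFReal, sub_zero]
  ring_nf

lemma integral_Ioi_mul_gaussianPDFReal {v : ℝ≥0} (hv : v ≠ 0) (a : ℝ) :
    ∫ x in Ioi a, x * gaussianPDFReal 0 v x = v * gaussianPDFReal 0 v a := by
  have hderiv (x : ℝ) : HasDerivAt (fun x => -v * gaussianPDFReal 0 v x)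
      (x * gaussianPDFReal 0 v x) x := by
    refine ((hasDerivAt_gaussianPDFReal 0 v x).const_mul (-(v : ℝ))).congr_deriv ?_
    have : (v : ℝ) ≠ 0 := by exact_mod_cast hv
    field_simp
    ring
  have hlim := (tendsto_gaussianPDFReal_atTop 0 v).const_mul (-(v : ℝ))
  rw [mul_zero] at hlim
  rw [integral_Ioi_of_hasDerivAt_of_tendsto' (fun x _ => hderiv x)
    (integrable_mul_gaussianPDFReal v).integrableOn hlim]
  ring

lemma hasDerivAt_inv_pow_sub_inv_mul_gaussianPDFReal {v : ℝ≥0} (hv : v ≠ 0) {x : ℝ}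
    (hx : x ≠ 0) :
    HasDerivAt (fun x => (v ^ 2 / x ^ 3 - v / x) * gaussianPDFReal 0 v x)
      ((1 - 3 * v ^ 2 / x ^ 4) * gaussianPDFReal 0 v x) x := by
  have h := ((((hasDerivAt_pow 3 x).inv (pow_ne_zero 3 hx)).const_mul ((v : ℝ) ^ 2)).sub
    ((hasDerivAt_inv hx).const_mul (v : ℝ))).mul (hasDerivAt_gaussianPDFReal 0 v x)
  have hv' : (v : ℝ) ≠ 0 := by exact_mod_cast hv
  refine h.congr_deriv ?_
  simp only [Pi.sub_apply, Pi.inv_apply]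
  field_simp
  ring

lemma mul_gaussianPDFReal_le_integral_Ioi_gaussianPDFReal {v : ℝ≥0} (hv : v ≠ 0) {a : ℝ}
    (ha : 0 < a) :
    (v / a - v ^ 2 / a ^ 3) * gaussianPDFReal 0 v a ≤ ∫ x in Ioi a, gaussianPDFReal 0 v x := by
  have hpdf : IntegrableOn (gaussianPDFReal 0 v) (Ioi a) :=
    (integrable_gaussianPDFReal 0 v).integrableOn
  have hint : IntegrableOn (fun x => (1 - 3 * v ^ 2 / x ^ 4) * gaussianPDFReal 0 v x) (Ioi a) := by
    refine hpdf.bdd_mul (c := 1 + 3 * v ^ 2 / a ^ 4)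
      (Measurable.aestronglyMeasurable (by fun_prop)) ?_
    filter_upwards [ae_restrict_mem measurableSet_Ioi] with x (hx : a < x)
    have hle : 3 * v ^ 2 / x ^ 4 ≤ 3 * v ^ 2 / a ^ 4 := by gcongr
    rw [Real.norm_eq_abs, abs_le]
    constructor <;> nlinarith [show 0 ≤ 3 * (v : ℝ) ^ 2 / x ^ 4 by positivity]
  have hlim :
      Tendsto (fun x => (v ^ 2 / x ^ 3 - v / x) * gaussianPDFReal 0 v x) atTop (𝓝 0) := by
    have hrat : Tendsto (fun x : ℝ => (v : ℝ) ^ 2 / x ^ 3 - v / x) atTop (𝓝 0) := by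
      simpa using ((tendsto_pow_atTop three_ne_zero).const_div_atTop ((v : ℝ) ^ 2)).sub
        (tendsto_id.const_div_atTop (v : ℝ))
    simpa using hrat.mul (tendsto_gaussianPDFReal_atTop 0 v)
  have hftc := integral_Ioi_of_hasDerivAt_of_tendsto' (fun x (hx : a ≤ x) =>
    hasDerivAt_inv_pow_sub_inv_mul_gaussianPDFReal hv (ha.trans_le hx).ne') hint hlim
  calc (v / a - v ^ 2 / a ^ 3) * gaussianPDFReal 0 v a
      = ∫ x in Ioi a, (1 - 3 * v ^ 2 / x ^ 4) * gaussianPDFReal 0 v x := by rw [hftc]; ring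
    _ ≤ ∫ x in Ioi a, gaussianPDFReal 0 v x := by
      refine setIntegral_mono_on hint hpdf measurableSet_Ioi fun x (hx : a < x) => ?_
      have := gaussianPDFReal_nonneg 0 v x
      have : 0 ≤ 3 * (v : ℝ) ^ 2 / x ^ 4 := by positivity
      nlinarith

lemma toReal_gaussianReal_Ici {v : ℝ≥0} (hv : v ≠ 0) (μ a : ℝ) :
    (gaussianReal μ v (Ici a)).toReal = ∫ x in Ioi a, gaussianPDFReal μ v x := by
  rw [gaussianReal_apply_eq_integral μ hv, ENNReal.toReal_ofReal
    (setIntegral_nonneg measurableSet_Ici fun x _ => gaussianPDFReal_nonneg μ v x),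
    integral_Ici_eq_integral_Ioi]

lemma integral_max_sub_zero_gaussianReal {v : ℝ≥0} (hv : v ≠ 0) (a : ℝ) :
    ∫ x, max (x - a) 0 ∂gaussianReal 0 v =
      v * gaussianPDFReal 0 v a - a * (gaussianReal 0 v (Ici a)).toReal := by
  have hrelu : (fun x => gaussianPDFReal 0 v x • max (x - a) 0) =
      (Ioi a).indicator fun x => x * gaussianPDFReal 0 v x - a * gaussianPDFReal 0 v x := by
    ext x
    rcases lt_or_ge a x with hx | hx
    · simp only [max_eq_left (sub_nonneg.2 hx.le), smul_eq_mul, mem_Ioi, hx, indicator_of_mem]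
      ring
    · simp [not_lt.2 hx, max_eq_right (sub_nonpos.2 hx)]
  rw [integral_gaussianReal_eq_integral_smul hv, hrelu, integral_indicator measurableSet_Ioi,
    integral_sub (integrable_mul_gaussianPDFReal v).integrableOn
      ((integrable_gaussianPDFReal 0 v).integrableOn.const_mul a),
    integral_const_mul, integral_Ioi_mul_gaussianPDFReal hv, toReal_gaussianReal_Ici hv]

lemma integral_max_sub_zero_gaussianReal_le {v : ℝ≥0} (hv : v ≠ 0) {a : ℝ} (ha : 0 < a) :
    ∫ x, max (x - a) 0 ∂gaussianReal 0 v ≤ v * gaussianPDFReal 0 v a * min 1 (v / a ^ 2) := by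
  have hpdf := gaussianPDFReal_nonneg 0 v a
  have htail := mul_gaussianPDFReal_le_integral_Ioi_gaussianPDFReal hv ha
  rw [integral_max_sub_zero_gaussianReal hv, toReal_gaussianReal_Ici hv,
    mul_min_of_nonneg _ _ (by positivity), mul_one]
  refine le_min ?_ ?_
  · have : 0 ≤ ∫ x in Ioi a, gaussianPDFReal 0 v x :=
      setIntegral_nonneg measurableSet_Ioi fun x _ => gaussianPDFReal_nonneg 0 v x
    nlinarith
  · calc _ ≤ v * gaussianPDFReal 0 v a
            - a * ((v / a - v ^ 2 / a ^ 3) * gaussianPDFReal 0 v a) := by gcongr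
      _ = _ := by field_simp; ring

lemma gaussianPDFReal_zero_toNNReal_sq {σ : ℝ} (hσ : 0 < σ) (x : ℝ) :
    gaussianPDFReal 0 (σ ^ 2).toNNReal x =
      Real.exp (-(x / σ) ^ 2 / 2) / √(2 * Real.pi) / σ := by
  rw [gaussianPDFReal, Real.coe_toNNReal _ (sq_nonneg σ), Real.sqrt_mul (by positivity),
    Real.sqrt_sq hσ.le, sub_zero, div_pow]
  field_simp

theorem gaussian_relu_shift_expectation_general
    (σ U : ℝ) (hσ : 0 < σ) (hU : 0 < U)
    (Ω : Type) (mΩ : MeasurableSpace Ω) (μ : Measure Ω)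
    (g : Ω → ℝ) (hgm : Measurable g)
    (hg : Measure.map g μ = gaussianReal 0 (σ ^ 2).toNNReal) :
    (∫ ω, max (g ω - U) 0 ∂μ) =
        σ * (Real.exp (-(U / σ) ^ 2 / 2) / Real.sqrt (2 * Real.pi))
          - U * (μ {ω | U ≤ g ω}).toReal ∧
      (∫ ω, max (g ω - U) 0 ∂μ) ≤
        σ * (Real.exp (-(U / σ) ^ 2 / 2) / Real.sqrt (2 * Real.pi)) * min 1 ((σ / U) ^ 2) := by
  have hv : (σ ^ 2).toNNReal ≠ 0 := by positivity
  have hvσ : ((σ ^ 2).toNNReal : ℝ) = σ ^ 2 := Real.coe_toNNReal _ (sq_nonneg σ)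
  have hE :
      ∫ ω, max (g ω - U) 0 ∂μ = ∫ x, max (x - U) 0 ∂gaussianReal 0 (σ ^ 2).toNNReal := by
    rw [← hg, integral_map hgm.aemeasurable (by fun_prop)]
  have hP : μ {ω | U ≤ g ω} = gaussianReal 0 (σ ^ 2).toNNReal (Ici U) := by
    rw [← hg, Measure.map_apply hgm measurableSet_Ici]
    rfl
  have hdensity : ((σ ^ 2).toNNReal : ℝ) * gaussianPDFReal 0 (σ ^ 2).toNNReal U =
      σ * (Real.exp (-(U / σ) ^ 2 / 2) / √(2 * Real.pi)) := by
    rw [hvσ, gaussianPDFReal_zero_toNNReal_sq hσ]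
    field_simp
  refine ⟨?_, ?_⟩
  · rw [hE, hP, integral_max_sub_zero_gaussianReal hv, hdensity]
  · calc _ ≤ _ := hE ▸ integral_max_sub_zero_gaussianReal_le hv hU
      _ = _ := by rw [hdensity, hvσ, ← div_pow]

/-- If `g` is a centred Gaussian with variance `σ² > 0` and `U > 0`, then
`E[max{g − U, 0}] = σ f(U/σ) − U P{g ≥ U}` and consequently
`E[max{g − U, 0}] ≤ σ f(U/σ) min{1, (σ/U)²}`, where `f` is the standard Gaussian density. -/
theorem gaussian_relu_shift_expectation
    (σ U : ℝ) (hσ : 0 < σ) (hU : 0 < U)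
    (Ω : Type) (mΩ : MeasurableSpace Ω) (μ : Measure Ω) (hμ : IsProbabilityMeasure μ)
    (g : Ω → ℝ) (hgm : Measurable g)
    (hg : Measure.map g μ = gaussianReal 0 (σ ^ 2).toNNReal) :
    (∫ ω, max (g ω - U) 0 ∂μ) =
        σ * (Real.exp (-(U / σ) ^ 2 / 2) / Real.sqrt (2 * Real.pi))
          - U * (μ {ω | U ≤ g ω}).toReal ∧
      (∫ ω, max (g ω - U) 0 ∂μ) ≤
        σ * (Real.exp (-(U / σ) ^ 2 / 2) / Real.sqrt (2 * Real.pi)) * min 1 ((σ / U) ^ 2) :=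
  gaussian_relu_shift_expectation_general σ U hσ hU Ω mΩ μ g hgm hg
end

section
/- Let g be a real centred Gaussian random variable with variance σ² > 0, let U > 0, set μ = E[ψ(g − U)] and X = ψ(g − U) − μ, where ψ(u) = max{u,0}. Then for every s ≥ 0, P{|g| ≥ s} ≥ (1 − 1/π)·P{|X| ≥ s}. -/
/-!
Let `m = E ψ(g − U)`. Since `U ≥ 0`, `m ≤ E ψ(g) = σ/√(2π)`, and the Gaussian density is at most
`1/(σ√(2π))`, so `P{|g| < m} ≤ 2m/(σ√(2π)) ≤ 1/π`. Hence for `s ≤ m` already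
`P{|g| ≥ s} ≥ 1 − 1/π`. For `s > m`, `X = ψ(g − U) − m ≥ −m > −s`, so `|X| ≥ s` forces
`g ≥ U + m + s ≥ s`, and `{|X| ≥ s} ⊆ {|g| ≥ s}`.
-/

open MeasureTheory ProbabilityTheory Set Real Filter
open scoped NNReal

theorem integral_Ioi_mul_exp_neg_mul_sq {b : ℝ} (hb : 0 < b) :
    ∫ x in Ioi 0, x * exp (-b * x ^ 2) = (2 * b)⁻¹ := by
  have hderiv : ∀ x ∈ Ici (0 : ℝ),
      HasDerivAt (fun x ↦ -(2 * b)⁻¹ * exp (-b * x ^ 2)) (x * exp (-b * x ^ 2)) x := by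
    intro x _
    refine (((hasDerivAt_pow 2 x).const_mul (-b)).exp.const_mul (-(2 * b)⁻¹)).congr_deriv ?_
    field_simp
    ring
  have hlim : Tendsto (fun x ↦ -(2 * b)⁻¹ * exp (-b * x ^ 2)) atTop (nhds (-(2 * b)⁻¹ * 0)) :=
    (tendsto_exp_atBot.comp
      ((tendsto_pow_atTop two_ne_zero).const_mul_atTop_of_neg (neg_lt_zero.2 hb))).const_mul _
  rw [integral_Ioi_of_hasDerivAt_of_tendsto' hderiv
    (integrable_mul_exp_neg_mul_sq hb).integrableOn hlim]
  simp

theorem gaussianPDFReal_le (μ : ℝ) (v : ℝ≥0) (x : ℝ) :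
    gaussianPDFReal μ v x ≤ (√(2 * π * v))⁻¹ := by
  rw [gaussianPDFReal]
  refine mul_le_of_le_one_right (by positivity) (exp_le_one_iff.2 ?_)
  exact div_nonpos_of_nonpos_of_nonneg (neg_nonpos.2 (sq_nonneg _)) (by positivity)

theorem gaussianReal_le_ofReal_mul_volume (μ : ℝ) {v : ℝ≥0} (hv : v ≠ 0) (s : Set ℝ) :
    gaussianReal μ v s ≤ ENNReal.ofReal (√(2 * π * v))⁻¹ * volume s := by
  rw [gaussianReal_apply μ hv, ← setLIntegral_const]
  exact lintegral_mono fun x ↦ ENNReal.ofReal_le_ofReal (gaussianPDFReal_le μ v x)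

theorem integral_max_zero_gaussianReal (v : ℝ≥0) :
    ∫ x, max x 0 ∂gaussianReal 0 v = √(v / (2 * π)) := by
  rcases eq_or_ne v 0 with rfl | hv
  · simp
  have hv' : (0 : ℝ) < v := by positivity
  have hdensity : (fun x ↦ gaussianPDFReal 0 v x • max x 0) =
      (Ioi 0).indicator fun x ↦ (√(2 * π * v))⁻¹ * (x * exp (-(2 * (v : ℝ))⁻¹ * x ^ 2)) := by
    ext x
    rcases le_or_gt x 0 with hx | hx
    · simp [hx, not_lt.2 hx]
    · simp only [gaussianPDFReal, indicator_of_mem (mem_Ioi.2 hx), max_eq_left hx.le,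
        smul_eq_mul, sub_zero]
      ring_nf
  rw [integral_gaussianReal_eq_integral_smul hv, hdensity, integral_indicator measurableSet_Ioi,
    integral_const_mul, integral_Ioi_mul_exp_neg_mul_sq (by positivity),
    sqrt_div' _ (by positivity), sqrt_mul' _ hv'.le]
  field_simp
  exact (sq_sqrt hv'.le).symm

theorem integral_max_sub_zero_gaussianReal_le_s16 (v : ℝ≥0) {U : ℝ} (hU : 0 ≤ U) :
    ∫ x, max (x - U) 0 ∂gaussianReal 0 v ≤ √(v / (2 * π)) := by
  have hint : Integrable (fun x ↦ x) (gaussianReal 0 v) :=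
    (memLp_id_gaussianReal 1).integrable le_rfl
  rw [← integral_max_zero_gaussianReal]
  exact integral_mono (hint.sub (integrable_const U)).pos_part hint.pos_part
    fun x ↦ max_le_max (by linarith) le_rfl

theorem gaussianReal_abs_lt_le {v : ℝ≥0} (hv : v ≠ 0) {a : ℝ} (ha : a ≤ √(v / (2 * π))) :
    gaussianReal 0 v {x | |x| < a} ≤ ENNReal.ofReal (1 / π) := by
  have hball : {x : ℝ | |x| < a} = Ioo (-a) a := by ext; simp [abs_lt]
  have hv' : (0 : ℝ) < v := by positivity
  calc gaussianReal 0 v {x | |x| < a}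
      ≤ ENNReal.ofReal (√(2 * π * v))⁻¹ * ENNReal.ofReal (a - -a) := by
        rw [hball, ← Real.volume_Ioo]
        exact gaussianReal_le_ofReal_mul_volume 0 hv _
    _ = ENNReal.ofReal ((√(2 * π * v))⁻¹ * (2 * a)) := by
        rw [← ENNReal.ofReal_mul (by positivity)]
        congr 1
        ring
    _ ≤ ENNReal.ofReal (1 / π) := by
        refine ENNReal.ofReal_le_ofReal ?_
        calc (√(2 * π * v))⁻¹ * (2 * a) ≤ (√(2 * π * v))⁻¹ * (2 * √(v / (2 * π))) := by gcongr
          _ = 1 / π := by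
            rw [sqrt_div' _ (by positivity), sqrt_mul' _ hv'.le]
            field_simp
            rw [sq_sqrt (by positivity)]

theorem le_abs_of_le_abs_max_sub_zero_sub {x U m s : ℝ} (hU : 0 ≤ U) (hm : 0 ≤ m) (hms : m < s)
    (h : s ≤ |max (x - U) 0 - m|) : s ≤ |x| := by
  rcases le_abs'.1 h with h | h
  · linarith [le_max_right (x - U) 0]
  · rcases le_max_iff.1 (show s + m ≤ max (x - U) 0 by linarith) with h | h
    · linarith [le_abs_self x]
    · linarith

/-- Let `g` be a centred Gaussian with variance `σ² > 0`, `U > 0`, and let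
`μ₀ = E[ψ(g − U)]`, `X = ψ(g − U) − μ₀` where `ψ` is the ReLU.  Then for every `s ≥ 0`,
`P{|g| ≥ s} ≥ (1 − 1/π) P{|X| ≥ s}`. -/
theorem gaussian_relu_tail_comparison
    (σ U : ℝ) (hσ : 0 < σ) (hU : 0 < U)
    (Ω : Type) (mΩ : MeasurableSpace Ω) (μ : Measure Ω) (hμ : IsProbabilityMeasure μ)
    (g : Ω → ℝ) (hgm : Measurable g)
    (hg : Measure.map g μ = gaussianReal 0 (σ ^ 2).toNNReal) :
    ∀ s : ℝ, 0 ≤ s →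
      ENNReal.ofReal (1 - 1 / Real.pi) *
          μ {ω | s ≤ |max (g ω - U) 0 - ∫ ω', max (g ω' - U) 0 ∂μ|} ≤
        μ {ω | s ≤ |g ω|} := by
  intro s _
  set m := ∫ ω, max (g ω - U) 0 ∂μ
  have hm_nonneg : 0 ≤ m := integral_nonneg fun _ ↦ le_max_right _ _
  rcases le_or_gt s m with hsm | hms
  · have hm_le : m ≤ √((σ ^ 2).toNNReal / (2 * π)) := by
      rw [show m = ∫ x, max (x - U) 0 ∂gaussianReal 0 (σ ^ 2).toNNReal by
        rw [← hg, integral_map hgm.aemeasurable (by fun_prop)]]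
      exact integral_max_sub_zero_gaussianReal_le_s16 _ hU.le
    have hball : μ {ω | |g ω| < s} ≤ ENNReal.ofReal (1 / π) := by
      have hmeas : MeasurableSet {x : ℝ | |x| < s} :=
        measurableSet_lt measurable_abs measurable_const
      rw [show {ω | |g ω| < s} = g ⁻¹' {x | |x| < s} from rfl, ← Measure.map_apply hgm hmeas, hg]
      exact gaussianReal_abs_lt_le (by positivity) (hsm.trans hm_le)
    calc ENNReal.ofReal (1 - 1 / π) * μ {ω | s ≤ |max (g ω - U) 0 - m|}
        ≤ 1 - ENNReal.ofReal (1 / π) := by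
          rw [ENNReal.ofReal_sub _ (by positivity), ENNReal.ofReal_one]
          exact mul_le_of_le_one_right' prob_le_one
      _ ≤ 1 - μ {ω | |g ω| < s} := tsub_le_tsub_left hball 1
      _ = μ {ω | s ≤ |g ω|} := by
          rw [← prob_compl_eq_one_sub (measurableSet_lt hgm.abs measurable_const)]
          simp only [compl_ofPred, not_lt]
  · calc ENNReal.ofReal (1 - 1 / π) * μ {ω | s ≤ |max (g ω - U) 0 - m|}
        ≤ μ {ω | s ≤ |max (g ω - U) 0 - m|} :=
          mul_le_of_le_one_left' (ENNReal.ofReal_le_one.2 (by linarith [one_div_pos.2 pi_pos]))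
      _ ≤ μ {ω | s ≤ |g ω|} :=
          measure_mono fun _ ↦ le_abs_of_le_abs_max_sub_zero_sub hU.le hm_nonneg hms
end
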